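/- arXiv:2411.06555 — 3 statements merged into one kernel-verified Lean document; each statement's English description precedes it below -/
import Mathlib

section
/- Let 1 ≤ r, t < ∞ and m ∈ ℕ. Let f, g ∈ L^∞_c(ℝⁿ), b ∈ L¹_loc(ℝⁿ), and let Q be a cube in ℝⁿ. For 0 ≤ k ≤ m define c_k := ⟨|b − ⟨b⟩_Q|^{m−k} |f|⟩_{r,Q} · ⟨|b − ⟨b⟩_Q|^{k} |g|⟩_{t,Q}. Then c_k ≤ c_0 + c_m for every 0 ≤ k ≤ m. -/
open MeasureTheory Set ENNReal

noncomputable section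

namespace Frac

/-- A half-open cube in `ℝⁿ`, given by its center and half-sidelength. -/
structure Cube (n : ℕ) where
  c : Fin n → ℝ
  h : ℝ
  h_pos : 0 < h

namespace Cube

variable {n : ℕ}

/-- The underlying (half-open) set of a cube. -/
def set (Q : Cube n) : Set (Fin n → ℝ) :=
  {y | ∀ i, Q.c i - Q.h ≤ y i ∧ y i < Q.c i + Q.h}

/-- The concentric dilate `3Q`. -/
def three (Q : Cube n) : Cube n :=
  ⟨Q.c, 3 * Q.h, by have := Q.h_pos; linarith⟩

/-- The sidelength `ℓ(Q)`. -/
def side (Q : Cube n) : ℝ := 2 * Q.h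

/-- The volume `|Q|` of a cube. -/
def vol (Q : Cube n) : ℝ≥0∞ := volume Q.set

/-- One of the `2ⁿ` dyadic children of a cube. -/
def child (Q : Cube n) (ε : Fin n → Bool) : Cube n :=
  ⟨fun i => Q.c i + (if ε i then Q.h / 2 else -(Q.h / 2)), Q.h / 2, by
    have := Q.h_pos; linarith⟩

/-- The normalized restriction of Lebesgue measure to a cube. -/
def nmeas (Q : Cube n) : Measure (Fin n → ℝ) := (Q.vol)⁻¹ • volume.restrict Q.set

end Cube

variable {n : ℕ}

/-- `R` is a dyadic child of `Q`. -/
def childRel (Q R : Cube n) : Prop := ∃ ε, R = Q.child ε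

/-- `R` is a dyadic descendant of `Q` (possibly `Q` itself). -/
def descendant (Q R : Cube n) : Prop := Relation.ReflTransGen childRel Q R

/-- A dyadic lattice in `ℝⁿ`. -/
structure IsDyadicLattice (D : Set (Cube n)) : Prop where
  mem_of_descendant : ∀ Q ∈ D, ∀ R : Cube n, descendant Q R → R ∈ D
  common_ancestor : ∀ Q ∈ D, ∀ Q' ∈ D, ∃ R ∈ D, descendant R Q ∧ descendant R Q'
  exists_contains : ∀ K : Set (Fin n → ℝ), IsCompact K → ∃ Q ∈ D, K ⊆ Q.set

/-- An `η`-sparse family of cubes. -/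
def IsSparse (η : ℝ) (S : Set (Cube n)) : Prop :=
  ∃ E : Cube n → Set (Fin n → ℝ),
    (∀ Q ∈ S, MeasurableSet (E Q) ∧ E Q ⊆ Q.set ∧ ENNReal.ofReal η * Q.vol ≤ volume (E Q)) ∧
    (∀ Q ∈ S, ∀ Q' ∈ S, Q ≠ Q' → Disjoint (E Q) (E Q'))

/-- The average `⟨f⟩_{r,Q} = (|Q|⁻¹∫_Q |f|^r)^{1/r}`, with the `essSup` interpretation
for `r = ∞`. -/
def avg (r : ℝ≥0∞) (Q : Cube n) (f : (Fin n → ℝ) → ℝ) : ℝ≥0∞ :=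
  eLpNorm f r Q.nmeas

/-- The (real-valued) average `⟨b⟩_Q`. -/
def avgR (Q : Cube n) (b : (Fin n → ℝ) → ℝ) : ℝ :=
  (∫ y in Q.set, b y) / (Q.vol).toReal

/-- The oscillation `osc_s(h; Q)`. -/
def osc (s : ℝ≥0∞) (Q : Cube n) (h : (Fin n → ℝ) → ℝ) : ℝ≥0∞ :=
  eLpNorm (fun p : ((Fin n → ℝ) × (Fin n → ℝ)) => h p.1 - h p.2) s (Q.nmeas.prod Q.nmeas)

/-- The sharp grand maximal truncation operator `𝓜^#_{T,s}`. -/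
def Msharp (T : ((Fin n → ℝ) → ℝ) → ((Fin n → ℝ) → ℝ)) (s : ℝ≥0∞)
    (f : (Fin n → ℝ) → ℝ) (x : Fin n → ℝ) : ℝ≥0∞ :=
  ⨆ (Q : Cube n) (_ : x ∈ Q.set), osc s Q (T ((Q.three.set)ᶜ.indicator f))

/-- `T` is a sublinear operator. -/
def Sublinear (T : ((Fin n → ℝ) → ℝ) → ((Fin n → ℝ) → ℝ)) : Prop :=
  (∀ f g : (Fin n → ℝ) → ℝ, ∀ᵐ x : Fin n → ℝ, |T (f + g) x| ≤ |T f x| + |T g x|) ∧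
  (∀ (c : ℝ) (f : (Fin n → ℝ) → ℝ), ∀ᵐ x : Fin n → ℝ, |T (fun y => c * f y) x| = |c| * |T f x|)

/-- Locally weak `L^{p₀} → L^{p₀ n/(n - a p₀)}` boundedness of an (`ℝ≥0∞`-valued)
operator `U`, with associated non-increasing function `φ : (0,1) → [0,∞)`. -/
def LocWeak (n : ℕ) (p₀ a : ℝ)
    (U : ((Fin n → ℝ) → ℝ) → ((Fin n → ℝ) → ℝ≥0∞)) (φ : ℝ → ℝ) : Prop :=
  (∀ t ∈ Ioo (0 : ℝ) 1, 0 ≤ φ t) ∧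
  (∀ t ∈ Ioo (0 : ℝ) 1, ∀ t' ∈ Ioo (0 : ℝ) 1, t ≤ t' → φ t' ≤ φ t) ∧
  ∀ (Q : Cube n) (f : (Fin n → ℝ) → ℝ),
    avg (ENNReal.ofReal p₀) Q (Q.set.indicator f) < ∞ →
    ∀ t ∈ Ioo (0 : ℝ) 1,
      volume {x ∈ Q.set |
          ENNReal.ofReal (φ t) * avg (ENNReal.ofReal p₀) Q (Q.set.indicator f) *
              Q.vol ^ (a / n) < U (Q.set.indicator f) x}
        ≤ ENNReal.ofReal t * Q.vol

/-- `|T f|`, viewed as an `ℝ≥0∞`-valued operator. -/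
def eabs (T : ((Fin n → ℝ) → ℝ) → ((Fin n → ℝ) → ℝ)) :
    ((Fin n → ℝ) → ℝ) → ((Fin n → ℝ) → ℝ≥0∞) :=
  fun f x => ENNReal.ofReal |T f x|

/-- The iterated commutator `T_b^m f (x) = T ((b(x) - b(·))^m f)(x)` (so `T_b^0 = T`). -/
def comm (T : ((Fin n → ℝ) → ℝ) → ((Fin n → ℝ) → ℝ))
    (b : (Fin n → ℝ) → ℝ) (m : ℕ) (f : (Fin n → ℝ) → ℝ) : (Fin n → ℝ) → ℝ :=
  fun x => T (fun y => (b x - b y) ^ m * f y) x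

/-- `w(Q) = ∫_Q w` for a weight `w`. -/
def wInt (w : (Fin n → ℝ) → ℝ) (Q : Cube n) : ℝ≥0∞ :=
  ∫⁻ y in Q.set, ENNReal.ofReal (w y)

/-- The weighted norm `‖f‖_{L^p(w)}`, `p ∈ (0,∞]`. -/
def wNorm (p : ℝ≥0∞) (w : (Fin n → ℝ) → ℝ) (f : (Fin n → ℝ) → ℝ) : ℝ≥0∞ :=
  eLpNorm f p (volume.withDensity fun x => ENNReal.ofReal (w x))

/-- The weighted `L^p`-norm of an `ℝ≥0∞`-valued function. -/
def wNormE (p : ℝ) (w : (Fin n → ℝ) → ℝ) (g : (Fin n → ℝ) → ℝ≥0∞) : ℝ≥0∞ :=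
  (∫⁻ x, g x ^ p * ENNReal.ofReal (w x)) ^ (1 / p)

/-- The Hardy–Littlewood maximal operator of an `ℝ≥0∞`-valued function. -/
def emax (g : (Fin n → ℝ) → ℝ≥0∞) (x : Fin n → ℝ) : ℝ≥0∞ :=
  ⨆ (Q : Cube n) (_ : x ∈ Q.set), (Q.vol)⁻¹ * ∫⁻ y in Q.set, g y

/-- The Fujii–Wilson `A_∞` constant `[w]_{A_∞}`. -/
def Ainf (w : (Fin n → ℝ) → ℝ) : ℝ≥0∞ :=
  ⨆ Q : Cube n,
    (wInt w Q)⁻¹ *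
      ∫⁻ x in Q.set, emax (Q.set.indicator fun y => ENNReal.ofReal (w y)) x

/-- The Muckenhoupt constant `[w]_{A_t}`. -/
def Amuck (t : ℝ) (w : (Fin n → ℝ) → ℝ) : ℝ≥0∞ :=
  ⨆ Q : Cube n,
    ((Q.vol)⁻¹ * wInt w Q) *
      ((Q.vol)⁻¹ * wInt (fun x => w x ^ ((1 : ℝ) - t / (t - 1))) Q) ^ (t - 1)

/-- The reverse Hölder constant `[w]_{RH_r}`. -/
def RHconst (r : ℝ) (w : (Fin n → ℝ) → ℝ) : ℝ≥0∞ :=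
  ⨆ Q : Cube n, avg (ENNReal.ofReal r) Q w / ((Q.vol)⁻¹ * wInt w Q)

/-- The two-weight constant `[w,σ]_{A^a_{β,γ}} = sup_Q |Q|^a w(Q)^β σ(Q)^γ`. -/
def A2 (a β γ : ℝ) (w σ : (Fin n → ℝ) → ℝ) : ℝ≥0∞ :=
  ⨆ Q : Cube n, Q.vol ^ a * wInt w Q ^ β * wInt σ Q ^ γ

/-- The Bloom weighted BMO seminorm `‖b‖_{BMO_ν}`. -/
def bmoW (ν b : (Fin n → ℝ) → ℝ) : ℝ≥0∞ :=
  ⨆ Q : Cube n, (wInt ν Q)⁻¹ * ∫⁻ x in Q.set, ENNReal.ofReal |b x - avgR Q b|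

/-- The BMO seminorm `‖b‖_{BMO}`. -/
def bmo (b : (Fin n → ℝ) → ℝ) : ℝ≥0∞ :=
  ⨆ Q : Cube n, (Q.vol)⁻¹ * ∫⁻ x in Q.set, ENNReal.ofReal |b x - avgR Q b|

/-- The conjugate exponent of `q ∈ [1,∞]`, as a real number (`1` when `q = ∞`). -/
def econjR (q : ℝ≥0∞) : ℝ := if q = ∞ then 1 else q.toReal / (q.toReal - 1)

/-- The conjugate exponent of `q ∈ [1,∞]`, as an element of `[1,∞]`. -/
def econj (q : ℝ≥0∞) : ℝ≥0∞ := if q = ∞ then 1 else ENNReal.ofReal (econjR q)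

/-- The conjugate exponent of a real `q ≥ 1`, as an element of `[1,∞]` (`∞` when `q = 1`). -/
def rconj (q : ℝ) : ℝ≥0∞ := if q = 1 then ∞ else ENNReal.ofReal (q / (q - 1))

/-- `1/q`, for `q ∈ (0,∞]` (`0` when `q = ∞`). -/
def invE (q : ℝ≥0∞) : ℝ := if q = ∞ then 0 else 1 / q.toReal

end Frac

/-!
Write `h = b - ⟨b⟩_Q`. Hölder's inequality with exponents `m / i` and `m / j`, applied to the
factorization `|h|^i |f| = (|h|^m |f|)^(i/m) |f|^(j/m)` with `i + j = m`, gives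
`c_k ≤ (⟨|h|^m f⟩_r ⟨g⟩_t)^((m-k)/m) (⟨f⟩_r ⟨|h|^m g⟩_t)^(k/m)`, and a weighted geometric mean
of two numbers is at most their sum.
-/

theorem Nat.cast_div_add_cast_div_eq_one {i j m : ℕ} (hijm : i + j = m) (hm : 0 < m) :
    (i : ℝ) / m + (j : ℝ) / m = 1 := by
  rw [← add_div, div_eq_one_iff_eq (by positivity)]
  exact_mod_cast hijm

theorem ENNReal.rpow_mul_rpow_le_add (x y : ℝ≥0∞) {s t : ℝ} (hs : 0 ≤ s) (ht : 0 ≤ t)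
    (hst : s + t = 1) : x ^ s * y ^ t ≤ x + y :=
  calc x ^ s * y ^ t ≤ (x ⊔ y) ^ s * (x ⊔ y) ^ t := by gcongr <;> simp
    _ = x ⊔ y := by rw [← ENNReal.rpow_add_of_nonneg _ _ hs ht, hst, ENNReal.rpow_one]
    _ ≤ x + y := sup_le le_self_add le_add_self

theorem ENNReal.pow_mul_eq_rpow_mul_rpow (a c : ℝ≥0∞) {i j m : ℕ} (hijm : i + j = m)
    (hm : 0 < m) :
    a ^ i * c = (a ^ m * c) ^ ((i : ℝ) / m) * c ^ ((j : ℝ) / m) := by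
  rw [ENNReal.mul_rpow_of_nonneg _ _ (by positivity), mul_assoc,
    ← ENNReal.rpow_add_of_nonneg _ _ (by positivity) (by positivity),
    Nat.cast_div_add_cast_div_eq_one hijm hm, ENNReal.rpow_one, ← ENNReal.rpow_natCast a m,
    ← ENNReal.rpow_mul, mul_div_cancel₀ _ (by positivity), ENNReal.rpow_natCast]

section Interpolation

variable {α : Type*} [MeasurableSpace α] {μ : Measure α}

theorem eLpNorm_pow_mul_le {p : ℝ≥0∞} (hp0 : p ≠ 0) (hp : p ≠ ∞) {h f : α → ℝ}
    (hh : AEMeasurable h μ) (hf : AEMeasurable f μ) {i j m : ℕ} (hijm : i + j = m)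
    (hm : 0 < m) :
    eLpNorm (fun x => |h x| ^ i * |f x|) p μ ≤
      eLpNorm (fun x => |h x| ^ m * |f x|) p μ ^ ((i : ℝ) / m) *
        eLpNorm f p μ ^ ((j : ℝ) / m) := by
  set q := p.toReal
  have hq : 0 < q := ENNReal.toReal_pos hp0 hp
  simp only [eLpNorm_eq_lintegral_rpow_enorm_toReal hp0 hp, enorm_mul, enorm_pow,
    Real.enorm_abs]
  set F := fun x => (‖h x‖ₑ ^ m * ‖f x‖ₑ) ^ q
  set G := fun x => ‖f x‖ₑ ^ q
  have hfactor : ∀ x, (‖h x‖ₑ ^ i * ‖f x‖ₑ) ^ q = F x ^ ((i : ℝ) / m) * G x ^ ((j : ℝ) / m) := by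
    intro x
    rw [ENNReal.pow_mul_eq_rpow_mul_rpow _ _ hijm hm, ENNReal.mul_rpow_of_nonneg _ _ hq.le,
      ← ENNReal.rpow_mul, ← ENNReal.rpow_mul, ← ENNReal.rpow_mul, ← ENNReal.rpow_mul,
      mul_comm q, mul_comm q]
  have hholder : ∫⁻ x, F x ^ ((i : ℝ) / m) * G x ^ ((j : ℝ) / m) ∂μ ≤
      (∫⁻ x, F x ∂μ) ^ ((i : ℝ) / m) * (∫⁻ x, G x ∂μ) ^ ((j : ℝ) / m) :=
    ENNReal.lintegral_mul_norm_pow_le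
      (((hh.enorm.pow_const m).mul hf.enorm).pow_const q) (hf.enorm.pow_const q) (by positivity) (by positivity)
      (Nat.cast_div_add_cast_div_eq_one hijm hm)
  calc (∫⁻ x, (‖h x‖ₑ ^ i * ‖f x‖ₑ) ^ q ∂μ) ^ (1 / q)
      ≤ ((∫⁻ x, F x ∂μ) ^ ((i : ℝ) / m) * (∫⁻ x, G x ∂μ) ^ ((j : ℝ) / m)) ^ (1 / q) := by
        simp only [hfactor]; gcongr
    _ = _ := by
        rw [ENNReal.mul_rpow_of_nonneg _ _ (by positivity), ← ENNReal.rpow_mul,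
          ← ENNReal.rpow_mul, ← ENNReal.rpow_mul, ← ENNReal.rpow_mul, mul_comm (1 / q),
          mul_comm (1 / q)]

end Interpolation

namespace Frac

theorem Cube.aemeasurable_nmeas {n : ℕ} (Q : Cube n) {u : (Fin n → ℝ) → ℝ}
    (hu : AEMeasurable u volume) : AEMeasurable u Q.nmeas :=
  hu.restrict.smul_measure _

theorem avg_abs {n : ℕ} (r : ℝ≥0∞) (Q : Cube n) (f : (Fin n → ℝ) → ℝ) :
    avg r Q (fun y => |f y|) = avg r Q f :=
  eLpNorm_norm f

theorem ck_le_c0_add_cm_general (n : ℕ) (r t : ℝ) (hr : 1 ≤ r) (ht : 1 ≤ t) (m : ℕ)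
    (f g b : (Fin n → ℝ) → ℝ)
    (hf : MemLp f ∞ volume)
    (hg : MemLp g ∞ volume)
    (hb : LocallyIntegrable b volume)
    (Q : Cube n) (k : ℕ) (hk : k ≤ m) :
    avg (ENNReal.ofReal r) Q (fun y => |b y - avgR Q b| ^ (m - k) * |f y|) *
        avg (ENNReal.ofReal t) Q (fun y => |b y - avgR Q b| ^ k * |g y|) ≤
      avg (ENNReal.ofReal r) Q (fun y => |b y - avgR Q b| ^ m * |f y|) *
          avg (ENNReal.ofReal t) Q g +
        avg (ENNReal.ofReal r) Q f *
          avg (ENNReal.ofReal t) Q (fun y => |b y - avgR Q b| ^ m * |g y|) := by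
  rcases Nat.eq_zero_or_pos m with rfl | hm
  · obtain rfl := Nat.le_zero.mp hk
    simp only [Nat.sub_zero, pow_zero, one_mul, avg_abs]
    exact le_self_add
  have hbQ : AEMeasurable (fun y => b y - avgR Q b) Q.nmeas :=
    Q.aemeasurable_nmeas (hb.aestronglyMeasurable.aemeasurable.sub_const _)
  have hr0 : ENNReal.ofReal r ≠ 0 := (ENNReal.ofReal_pos.mpr (by linarith)).ne'
  have ht0 : ENNReal.ofReal t ≠ 0 := (ENNReal.ofReal_pos.mpr (by linarith)).ne'
  set A := avg (ENNReal.ofReal r) Q (fun y => |b y - avgR Q b| ^ m * |f y|)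
  set B := avg (ENNReal.ofReal r) Q f
  set C := avg (ENNReal.ofReal t) Q (fun y => |b y - avgR Q b| ^ m * |g y|)
  set D := avg (ENNReal.ofReal t) Q g
  set s : ℝ := ((m - k : ℕ) : ℝ) / m
  set θ : ℝ := (k : ℝ) / m
  have hf_interp : avg (ENNReal.ofReal r) Q (fun y => |b y - avgR Q b| ^ (m - k) * |f y|) ≤
      A ^ s * B ^ θ :=
    eLpNorm_pow_mul_le hr0 ofReal_ne_top hbQ
      (Q.aemeasurable_nmeas hf.aestronglyMeasurable.aemeasurable) (Nat.sub_add_cancel hk) hm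
  have hg_interp : avg (ENNReal.ofReal t) Q (fun y => |b y - avgR Q b| ^ k * |g y|) ≤
      C ^ θ * D ^ s :=
    eLpNorm_pow_mul_le ht0 ofReal_ne_top hbQ
      (Q.aemeasurable_nmeas hg.aestronglyMeasurable.aemeasurable) (Nat.add_sub_cancel' hk) hm
  calc _ ≤ (A ^ s * B ^ θ) * (C ^ θ * D ^ s) := mul_le_mul' hf_interp hg_interp
    _ = (A * D) ^ s * (B * C) ^ θ := by
        rw [ENNReal.mul_rpow_of_nonneg _ _ (by positivity),
          ENNReal.mul_rpow_of_nonneg _ _ (by positivity)]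
        ring
    _ ≤ A * D + B * C := ENNReal.rpow_mul_rpow_le_add _ _ (by positivity) (by positivity)
      (Nat.cast_div_add_cast_div_eq_one (Nat.sub_add_cancel hk) hm)

/-- For `c_k := ⟨|b - ⟨b⟩_Q|^{m-k}|f|⟩_{r,Q} ⟨|b - ⟨b⟩_Q|^{k}|g|⟩_{t,Q}` one has
`c_k ≤ c_0 + c_m`. -/
theorem ck_le_c0_add_cm (n : ℕ) (r t : ℝ) (hr : 1 ≤ r) (ht : 1 ≤ t) (m : ℕ) (hm : 1 ≤ m)
    (f g b : (Fin n → ℝ) → ℝ)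
    (hf : MemLp f ∞ volume) (hf' : HasCompactSupport f)
    (hg : MemLp g ∞ volume) (hg' : HasCompactSupport g)
    (hb : LocallyIntegrable b volume)
    (Q : Cube n) (k : ℕ) (hk : k ≤ m) :
    avg (ENNReal.ofReal r) Q (fun y => |b y - avgR Q b| ^ (m - k) * |f y|) *
        avg (ENNReal.ofReal t) Q (fun y => |b y - avgR Q b| ^ k * |g y|) ≤
      avg (ENNReal.ofReal r) Q (fun y => |b y - avgR Q b| ^ m * |f y|) *
          avg (ENNReal.ofReal t) Q g +
        avg (ENNReal.ofReal r) Q f *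
          avg (ENNReal.ofReal t) Q (fun y => |b y - avgR Q b| ^ m * |g y|) :=
  ck_le_c0_add_cm_general n r t hr ht m f g b hf hg hb Q k hk

end Frac
end
end

section
/- (Three lattice theorem) For every dyadic lattice 𝒟 in ℝⁿ there exist 3ⁿ dyadic lattices 𝒟¹, …, 𝒟^{3ⁿ} such that {3Q : Q ∈ 𝒟} = ⋃_{j=1}^{3ⁿ} 𝒟ʲ, and for every cube Q ∈ 𝒟 and every j = 1, …, 3ⁿ there exists a unique cube R ∈ 𝒟ʲ with sidelength ℓ(R) = 3ℓ(Q) containing Q. -/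
open MeasureTheory Set ENNReal

noncomputable section

/-!
For `n ≥ 1` a dyadic lattice `𝒟` contains a chain `P₀, P₁, …`, each `P_K` the child of `P_{K+1}`
at position `δ_K ∈ {0,1}ⁿ`, whose descendants exhaust `𝒟`; every `Q ∈ 𝒟` is a cube of the dyadic
grid of some `P_K`. Given `j ∈ {0,1,2}ⁿ`, let `R_K` be the cube of sidelength `3ℓ(P_K)`, tiled by
translates of `P_K`, in which `P_K` sits at position `t_K`, where `t₀ = j` and
`t_{K+1} ≡ 2t_K + δ_K (mod 3)`. This congruence makes `R_K` a child of `R_{K+1}`, and `𝒟ʲ` is the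
set of descendants of the `R_K`. The cubes of generation `k` below `R_K` are exactly the `3Q` with
`Q` in the grid of `P_K` at a position `≡ 1 - 2ᵏt_K (mod 3)`. As `2ᵏ` is invertible modulo `3`,
each `3Q` lies in some `𝒟ʲ`, and each `Q` has a neighbour `Q'` with `3Q' ∈ 𝒟ʲ`, which is the cube
of `𝒟ʲ` of sidelength `3ℓ(Q)` containing `Q`. In dimension `0` all cubes are `ℝ⁰` and
`{3Q : Q ∈ 𝒟}` itself serves as every `𝒟ʲ`.
-/

namespace Frac

variable {n : ℕ} {D : Set (Cube n)}

namespace Cube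

def corner (Q : Cube n) (i : Fin n) : ℝ := Q.c i - Q.h

def ofCorner (x : Fin n → ℝ) (h : ℝ) (hh : 0 < h) : Cube n := ⟨fun i => x i + h, h, hh⟩

@[simp] lemma corner_ofCorner (x : Fin n → ℝ) (h : ℝ) (hh : 0 < h) :
    (ofCorner x h hh).corner = x := by
  funext i; simp [corner, ofCorner]

@[simp] lemma three_h (Q : Cube n) : Q.three.h = 3 * Q.h := rfl

@[simp] lemma corner_three (Q : Cube n) (i : Fin n) : Q.three.corner i = Q.corner i - 2 * Q.h := by
  simp only [corner, three]; ring

@[simp] lemma child_h (Q : Cube n) (ε : Fin n → Bool) : (Q.child ε).h = Q.h / 2 := rfl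

@[simp] lemma corner_child (Q : Cube n) (ε : Fin n → Bool) (i : Fin n) :
    (Q.child ε).corner i = Q.corner i + if ε i then Q.h else 0 := by
  simp only [corner, child]; split <;> ring

lemma mem_set_iff {Q : Cube n} {y : Fin n → ℝ} :
    y ∈ Q.set ↔ ∀ i, Q.corner i ≤ y i ∧ y i < Q.corner i + 2 * Q.h := by
  refine forall_congr' fun i => and_congr Iff.rfl ?_
  rw [corner]; constructor <;> intro h <;> linarith

lemma ext_of_corner {Q R : Cube n} (hh : Q.h = R.h) (hc : ∀ i, Q.corner i = R.corner i) :
    Q = R := by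
  obtain ⟨c, h, _⟩ := Q
  obtain ⟨c', h', _⟩ := R
  simp only [corner] at hh hc
  subst hh
  simp only [mk.injEq, and_true]
  funext i
  linarith [hc i]

lemma eq_of_h_eq_of_dim_zero {Q R : Cube 0} (hh : Q.h = R.h) : Q = R :=
  ext_of_corner hh finZeroElim

lemma center_mem (Q : Cube n) : Q.c ∈ Q.set :=
  fun _ => ⟨by linarith [Q.h_pos], by linarith [Q.h_pos]⟩

lemma set_subset_Icc (Q : Cube n) : Q.set ⊆ Icc Q.corner (Q.corner + fun _ => 2 * Q.h) :=
  fun _ hy => ⟨fun i => (mem_set_iff.1 hy i).1, fun i => (mem_set_iff.1 hy i).2.le⟩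

lemma set_subset_of_corner {Q R : Cube n} (h₁ : ∀ i, R.corner i ≤ Q.corner i)
    (h₂ : ∀ i, Q.corner i + 2 * Q.h ≤ R.corner i + 2 * R.h) : Q.set ⊆ R.set := by
  intro y hy
  rw [mem_set_iff] at hy ⊢
  exact fun i => ⟨(h₁ i).trans (hy i).1, (hy i).2.trans_le (h₂ i)⟩

def third (R : Cube n) : Cube n := ⟨R.c, R.h / 3, by linarith [R.h_pos]⟩

@[simp] lemma three_third (R : Cube n) : R.third.three = R := by
  simp only [three, third]
  congr 1
  ring

def gridCube (P : Cube n) (k : ℕ) (z : Fin n → ℤ) : Cube n :=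
  ofCorner (fun i => P.corner i + 2 * (P.h / 2 ^ k) * z i) (P.h / 2 ^ k)
    (div_pos P.h_pos (by positivity))

@[simp] lemma gridCube_h (P : Cube n) (k : ℕ) (z : Fin n → ℤ) :
    (P.gridCube k z).h = P.h / 2 ^ k := rfl

@[simp] lemma corner_gridCube (P : Cube n) (k : ℕ) (z : Fin n → ℤ) (i : Fin n) :
    (P.gridCube k z).corner i = P.corner i + 2 * (P.h / 2 ^ k) * z i := by
  simp [gridCube]

lemma gridCube_zero (P : Cube n) : P.gridCube 0 0 = P :=
  ext_of_corner (by simp) (by simp)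

lemma child_eq_gridCube (P : Cube n) (ε : Fin n → Bool) :
    P.child ε = P.gridCube 1 (fun i => if ε i then 1 else 0) :=
  ext_of_corner (by simp) fun i => by
    simp only [corner_child, corner_gridCube]
    split <;> simp [mul_comm]; ring

lemma gridCube_gridCube (P : Cube n) (k l : ℕ) (z w : Fin n → ℤ) :
    (P.gridCube k z).gridCube l w = P.gridCube (k + l) (fun i => 2 ^ l * z i + w i) :=
  ext_of_corner (by simp [pow_add, div_div]) fun i => by
    simp only [corner_gridCube, gridCube_h, pow_add]; push_cast; field_simp; ring

lemma gridCube_set_subset_iff {P : Cube n} {k : ℕ} {z : Fin n → ℤ} :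
    (P.gridCube k z).set ⊆ P.set ↔ ∀ i, 0 ≤ z i ∧ z i < 2 ^ k := by
  set G := P.gridCube k z
  have hq : 0 < P.h / 2 ^ k := G.h_pos
  have hP : P.h = 2 ^ k * (P.h / 2 ^ k) := by field_simp
  constructor
  · intro hsub i
    -- the center of `G` alone pins down `z`
    have hc := mem_set_iff.1 (hsub G.center_mem) i
    have hcG : G.c i = P.corner i + 2 * (P.h / 2 ^ k) * z i + P.h / 2 ^ k := by
      rw [← corner_gridCube, corner]; simp [G]
    rw [hcG] at hc
    have h₁ : (0 : ℝ) ≤ 2 * z i + 1 := by nlinarith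
    have h₂ : (2 * z i + 1 : ℝ) < 2 * 2 ^ k := by nlinarith
    constructor
    · have : (0 : ℤ) ≤ 2 * z i + 1 := by exact_mod_cast h₁
      omega
    · have : 2 * z i + 1 < 2 * 2 ^ k := by exact_mod_cast h₂
      omega
  · intro hz
    refine set_subset_of_corner (fun i => ?_) fun i => ?_
    · have : (0 : ℝ) ≤ z i := by exact_mod_cast (hz i).1
      simp only [G, corner_gridCube]
      nlinarith
    · have : (z i : ℝ) + 1 ≤ 2 ^ k := by exact_mod_cast (hz i).2
      simp only [G, corner_gridCube, gridCube_h]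
      nlinarith

lemma gridCube_eq_of_h_eq {P : Cube n} {k l : ℕ} {z w : Fin n → ℤ}
    (hh : (P.gridCube k z).h = (P.gridCube l w).h)
    (hne : ((P.gridCube k z).set ∩ (P.gridCube l w).set).Nonempty) :
    P.gridCube k z = P.gridCube l w := by
  have hkl : k = l := by
    have h2 : (2 : ℝ) ^ k = 2 ^ l := by
      simp only [gridCube_h] at hh
      field_simp at hh
      exact (mul_left_cancel₀ P.h_pos.ne' hh).symm
    exact pow_right_injective₀ (by norm_num) (by norm_num) h2
  subst hkl
  obtain ⟨y, hyz, hyw⟩ := hne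
  have hq : 0 < P.h / 2 ^ k := (P.gridCube k z).h_pos
  congr 1
  funext i
  have hz := mem_set_iff.1 hyz i
  have hw := mem_set_iff.1 hyw i
  simp only [corner_gridCube, gridCube_h] at hz hw
  have h₁ : (z i : ℝ) < w i + 1 := by nlinarith
  have h₂ : (w i : ℝ) < z i + 1 := by nlinarith
  have h₁' : z i < w i + 1 := by exact_mod_cast h₁
  have h₂' : w i < z i + 1 := by exact_mod_cast h₂
  omega

lemma gridCube_set_subset_three {P : Cube n} {k : ℕ} {z w : Fin n → ℤ}
    (hzw : ∀ i, |z i - w i| ≤ 1) : (P.gridCube k z).set ⊆ (P.gridCube k w).three.set := by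
  have hq : 0 < P.h / 2 ^ k := (P.gridCube k z).h_pos
  have hzw' : ∀ i, |(z i : ℝ) - w i| ≤ 1 := fun i => by exact_mod_cast hzw i
  refine set_subset_of_corner (fun i => ?_) fun i => ?_ <;>
    · simp only [corner_three, corner_gridCube, three_h, gridCube_h]
      nlinarith [abs_le.1 (hzw' i)]

/-- The cube of sidelength `3ℓ(P)`, made of `3ⁿ` translates of `P`, in which `P` sits at position
`t`. -/
def triple (P : Cube n) (t : Fin n → ℤ) : Cube n :=
  ofCorner (fun i => P.corner i - 2 * P.h * t i) (3 * P.h) (by linarith [P.h_pos])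

@[simp] lemma triple_h (P : Cube n) (t : Fin n → ℤ) : (P.triple t).h = 3 * P.h := rfl

@[simp] lemma corner_triple (P : Cube n) (t : Fin n → ℤ) (i : Fin n) :
    (P.triple t).corner i = P.corner i - 2 * P.h * t i := by
  simp [triple]

lemma set_subset_triple (P : Cube n) {t : Fin n → ℤ} (ht : ∀ i, 0 ≤ t i ∧ t i < 3) :
    P.set ⊆ (P.triple t).set := by
  have hP := P.h_pos
  have ht' : ∀ i, (0 : ℝ) ≤ t i ∧ (t i : ℝ) ≤ 2 := fun i =>
    ⟨by exact_mod_cast (ht i).1, by exact_mod_cast (show t i ≤ 2 by linarith [(ht i).2])⟩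
  refine set_subset_of_corner (fun i => ?_) fun i => ?_ <;>
    · simp only [corner_triple, triple_h]
      nlinarith [ht' i]

lemma gridCube_triple (P : Cube n) (t : Fin n → ℤ) (k : ℕ) (b : Fin n → ℤ) :
    (P.triple t).gridCube k b = (P.gridCube k fun i => 3 * b i + 1 - 2 ^ k * t i).three :=
  ext_of_corner (by simp; ring) fun i => by
    simp only [corner_gridCube, corner_triple, triple_h, corner_three, gridCube_h]
    push_cast
    field_simp
    ring

end Cube

lemma childRel_of_corner {P Q : Cube n} (hh : Q.h = P.h / 2)
    (hc : ∀ i, Q.corner i = P.corner i ∨ Q.corner i = P.corner i + P.h) : childRel P Q := by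
  classical
  refine ⟨fun i => decide (Q.corner i = P.corner i + P.h), Cube.ext_of_corner hh fun i => ?_⟩
  rw [Cube.corner_child]
  by_cases h : Q.corner i = P.corner i + P.h
  · simp [h]
  · simp [(hc i).resolve_right h]

lemma descendant.exists_eq_gridCube {P Q : Cube n} (h : descendant P Q) :
    ∃ k z, (∀ i, 0 ≤ z i ∧ z i < 2 ^ k) ∧ Q = P.gridCube k z := by
  induction h with
  | refl => exact ⟨0, 0, by simp, P.gridCube_zero.symm⟩
  | tail _ hQR ih =>
    obtain ⟨k, z, hz, rfl⟩ := ih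
    obtain ⟨ε, rfl⟩ := hQR
    refine ⟨k + 1, fun i => 2 * z i + if ε i then 1 else 0, fun i => ?_, ?_⟩
    · have := hz i
      dsimp only
      split <;> constructor <;> omega
    · rw [Cube.child_eq_gridCube, Cube.gridCube_gridCube]
      simp

lemma descendant_gridCube (P : Cube n) {k : ℕ} {z : Fin n → ℤ} (hz : ∀ i, 0 ≤ z i ∧ z i < 2 ^ k) :
    descendant P (P.gridCube k z) := by
  induction k generalizing P z with
  | zero =>
    obtain rfl : z = 0 := funext fun i => by have := hz i; simp at this ⊢; omega
    rw [P.gridCube_zero]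
    exact .refl
  | succ k ih =>
    -- the leading binary digits of `z` select the child of `P` containing `P.gridCube (k+1) z`
    let ε : Fin n → Bool := fun i => decide (2 ^ k ≤ z i)
    let z' : Fin n → ℤ := fun i => z i - if ε i then 2 ^ k else 0
    have hz' : ∀ i, 0 ≤ z' i ∧ z' i < 2 ^ k := by
      intro i
      have := hz i
      simp only [z', ε]
      split <;> rename_i h <;> simp only [decide_eq_true_eq] at h <;> constructor <;> omega
    have hz_eq : P.gridCube (k + 1) z = (P.child ε).gridCube k z' := by
      rw [Cube.child_eq_gridCube, Cube.gridCube_gridCube, add_comm]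
      congr 1
      funext i
      simp only [z']
      split <;> ring
    rw [hz_eq]
    exact .head ⟨ε, rfl⟩ (ih _ hz')

lemma descendant.set_subset {P Q : Cube n} (h : descendant P Q) : Q.set ⊆ P.set := by
  obtain ⟨k, z, hz, rfl⟩ := h.exists_eq_gridCube
  exact Cube.gridCube_set_subset_iff.2 hz

namespace IsDyadicLattice

lemma eq_of_h_eq (hD : IsDyadicLattice D) {Q R : Cube n} (hQ : Q ∈ D) (hR : R ∈ D)
    (hh : Q.h = R.h) (hne : (Q.set ∩ R.set).Nonempty) : Q = R := by
  obtain ⟨S, -, hSQ, hSR⟩ := hD.common_ancestor Q hQ R hR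
  obtain ⟨k, z, -, rfl⟩ := hSQ.exists_eq_gridCube
  obtain ⟨l, w, -, rfl⟩ := hSR.exists_eq_gridCube
  exact Cube.gridCube_eq_of_h_eq hh hne

lemma exists_set_subset (hD : IsDyadicLattice D) (Q : Cube n) : ∃ S ∈ D, Q.set ⊆ S.set :=
  let ⟨S, hS, hQS⟩ := hD.exists_contains _ isCompact_Icc
  ⟨S, hS, Q.set_subset_Icc.trans hQS⟩

lemma gridCube_mem (hD : IsDyadicLattice D) {P : Cube n} (hP : P ∈ D) (k : ℕ) (z : Fin n → ℤ) :
    P.gridCube k z ∈ D := by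
  obtain ⟨S, hS, hQS⟩ := hD.exists_set_subset (P.gridCube k z)
  obtain ⟨T, hT, hTP, hTS⟩ := hD.common_ancestor P hP S hS
  obtain ⟨l, w, -, rfl⟩ := hTP.exists_eq_gridCube
  rw [Cube.gridCube_gridCube] at hQS ⊢
  exact hD.mem_of_descendant T hT _
    (descendant_gridCube T (Cube.gridCube_set_subset_iff.1 (hQS.trans hTS.set_subset)))

lemma exists_parent (hD : IsDyadicLattice D) (hn : 0 < n) {Q : Cube n} (hQ : Q ∈ D) :
    ∃ P ∈ D, childRel P Q := by
  obtain ⟨S, hS, hS'⟩ := hD.exists_contains (Icc Q.corner (Q.corner + fun _ => 2 * Q.h))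
    isCompact_Icc
  obtain ⟨T, hT, hTQ, hTS⟩ := hD.common_ancestor Q hQ S hS
  rcases hTQ.cases_tail with rfl | ⟨P, hTP, hPQ⟩
  · -- then `S ⊆ Q`, but `S` contains the upper corner of `Q`
    have hup := hS' ⟨fun i => by simp [Q.h_pos.le], le_rfl⟩
    have := (Cube.mem_set_iff.1 (hTS.set_subset hup) ⟨0, hn⟩).2
    simp at this
  · exact ⟨P, hD.mem_of_descendant T hT P hTP, hPQ⟩

end IsDyadicLattice

lemma exists_dvd_add_two_pow_mul (k : ℕ) (a : ℤ) :
    ∃ t, 0 ≤ t ∧ t < 3 ∧ (3 : ℤ) ∣ a + 2 ^ k * t := by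
  have h2 : (2 : ℤ) ^ k % 3 = 1 ∨ (2 : ℤ) ^ k % 3 = 2 := by
    induction k with
    | zero => simp
    | succ k ih => rw [pow_succ, Int.mul_emod]; omega
  -- `2ᵏ` is its own inverse modulo `3`
  refine ⟨-a * 2 ^ k % 3, by omega, by omega, ?_⟩
  rw [Int.dvd_iff_emod_eq_zero, Int.add_emod, Int.mul_emod, Int.emod_emod_of_dvd _ (dvd_refl _),
    Int.mul_emod (-a)]
  rcases h2 with h | h <;> rw [h] <;> omega

structure Tower (D : Set (Cube n)) where
  P : ℕ → Cube n
  mem : ∀ K, P K ∈ D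
  δ : ℕ → Fin n → Bool
  child_eq : ∀ K, P K = (P (K + 1)).child (δ K)
  cofinal : ∀ Q ∈ D, ∃ K, descendant (P K) Q

lemma IsDyadicLattice.nonempty_tower (hD : IsDyadicLattice D) (hn : 0 < n) :
    Nonempty (Tower D) := by
  obtain ⟨Q₀, hQ₀, -⟩ := hD.exists_contains ∅ isCompact_empty
  choose parent hparent δ hδ using fun Q : D => hD.exists_parent hn Q.2
  let P : ℕ → D := fun K => (fun Q => ⟨parent Q, hparent Q⟩)^[K] ⟨Q₀, hQ₀⟩
  have hP_succ : ∀ K, (P (K + 1) : Cube n) = parent (P K) := fun K =>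
    congrArg Subtype.val (Function.iterate_succ_apply' _ K _)
  have hP : ∀ K, (P K : Cube n).h = 2 ^ K * Q₀.h ∧ descendant (P K) Q₀ := by
    intro K
    induction K with
    | zero => exact ⟨by simp [P], .refl⟩
    | succ K ih =>
      have hchild := hδ (P K)
      rw [← hP_succ] at hchild
      refine ⟨?_, .head ⟨_, hchild⟩ ih.2⟩
      have := congrArg Cube.h hchild
      rw [Cube.child_h] at this
      rw [pow_succ]
      linarith [ih.1]
  refine ⟨⟨fun K => P K, fun K => (P K).2, fun K => δ (P K), fun K => hP_succ K ▸ hδ (P K),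
    fun Q hQ => ?_⟩⟩
  -- the common ancestor of `Q` and `Q₀` is the cube of the tower of its size
  obtain ⟨S, hS, hSQ, hSQ₀⟩ := hD.common_ancestor Q hQ Q₀ hQ₀
  obtain ⟨K, z, -, hQ₀S⟩ := hSQ₀.exists_eq_gridCube
  refine ⟨K, hD.eq_of_h_eq hS (P K).2 ?_ ⟨Q₀.c, hSQ₀.set_subset Q₀.center_mem,
    (hP K).2.set_subset Q₀.center_mem⟩ ▸ hSQ⟩
  rw [(hP K).1, hQ₀S, Cube.gridCube_h]
  field_simp

namespace Tower

variable (T : Tower D)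

/-- `bigCube j K` is the cube of sidelength `3ℓ(P K)` in which `P K` sits at position
`shift j K ∈ {0,1,2}ⁿ`. The recursion makes `2 * shift j (K + 1) + δ K - shift j K ∈ {0, 3}`,
which is what `bigCube j K` being a child of `bigCube j (K + 1)` amounts to. -/
def shift (j : Fin n → Fin 3) : ℕ → Fin n → ℤ
  | 0 => fun i => j i
  | K + 1 => fun i => (2 * shift j K i + if T.δ K i then 1 else 0) % 3

def bigCube (j : Fin n → Fin 3) (K : ℕ) : Cube n := (T.P K).triple (T.shift j K)

def lattice (j : Fin n → Fin 3) : Set (Cube n) := {R | ∃ K, descendant (T.bigCube j K) R}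

lemma shift_mem (j : Fin n → Fin 3) (K : ℕ) (i : Fin n) :
    0 ≤ T.shift j K i ∧ T.shift j K i < 3 := by
  cases K with
  | zero => simp only [shift]; omega
  | succ K => simp only [shift]; omega

lemma exists_shift_eq (K : ℕ) {t : Fin n → ℤ} (ht : ∀ i, 0 ≤ t i ∧ t i < 3) :
    ∃ j, T.shift j K = t := by
  induction K generalizing t with
  | zero =>
    exact ⟨fun i => ⟨(t i).toNat, by have := ht i; omega⟩,
      funext fun i => by have := ht i; simp [shift]; omega⟩
  | succ K ih =>
    -- `s ↦ (2 s + d) % 3` is an involution of `{0, 1, 2}`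
    obtain ⟨j, hj⟩ := ih (t := fun i => (2 * t i + if T.δ K i then 1 else 0) % 3) fun i => by omega
    refine ⟨j, funext fun i => ?_⟩
    simp only [shift, hj]
    have := ht i
    split <;> omega

lemma childRel_bigCube (j : Fin n → Fin 3) (K : ℕ) :
    childRel (T.bigCube j (K + 1)) (T.bigCube j K) := by
  have hP := T.child_eq K
  have hh : (T.P K).h = (T.P (K + 1)).h / 2 := by rw [hP, Cube.child_h]
  refine childRel_of_corner (by simp [bigCube, hh]; ring) fun i => ?_
  have hc : (T.P K).corner i =
      (T.P (K + 1)).corner i + if T.δ K i then (T.P (K + 1)).h else 0 := by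
    rw [hP, Cube.corner_child]
  have hs := T.shift_mem j K i
  have hdigit : 2 * T.shift j (K + 1) i + (if T.δ K i then 1 else 0) - T.shift j K i = 0 ∨
      2 * T.shift j (K + 1) i + (if T.δ K i then 1 else 0) - T.shift j K i = 3 := by
    simp only [shift]; split <;> omega
  simp only [bigCube, Cube.corner_triple, Cube.triple_h, hc, hh]
  generalize T.δ K i = d at hdigit
  rcases hdigit with hd | hd <;> [left; right] <;>
    · have hd' := congrArg (Int.cast : ℤ → ℝ) hd
      push_cast at hd'
      cases d <;> simp only [Bool.false_eq_true, if_true, if_false] at hd' ⊢ <;>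
        linear_combination (T.P (K + 1)).h * hd'

lemma descendant_bigCube (j : Fin n → Fin 3) {K M : ℕ} (hKM : K ≤ M) :
    descendant (T.bigCube j M) (T.bigCube j K) := by
  induction M, hKM using Nat.le_induction with
  | base => exact .refl
  | succ M _ ih => exact .head (T.childRel_bigCube j M) ih

lemma isDyadicLattice_lattice (hD : IsDyadicLattice D) (j : Fin n → Fin 3) :
    IsDyadicLattice (T.lattice j) where
  mem_of_descendant := fun _ ⟨K, hK⟩ _ hR => ⟨K, hK.trans hR⟩
  common_ancestor := fun _ ⟨K, hK⟩ _ ⟨M, hM⟩ =>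
    ⟨T.bigCube j (max K M), ⟨_, .refl⟩, (T.descendant_bigCube j (le_max_left K M)).trans hK,
      (T.descendant_bigCube j (le_max_right K M)).trans hM⟩
  exists_contains := fun C hC => by
    obtain ⟨S, hS, hCS⟩ := hD.exists_contains C hC
    obtain ⟨K, hK⟩ := T.cofinal S hS
    exact ⟨T.bigCube j K, ⟨K, .refl⟩,
      hCS.trans (hK.set_subset.trans ((T.P K).set_subset_triple (T.shift_mem j K)))⟩

lemma exists_three_mem_lattice {Q : Cube n} (hQ : Q ∈ D) : ∃ j, Q.three ∈ T.lattice j := by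
  obtain ⟨K, hK⟩ := T.cofinal Q hQ
  obtain ⟨k, a, ha, rfl⟩ := hK.exists_eq_gridCube
  choose t ht using fun i => exists_dvd_add_two_pow_mul k (a i - 1)
  obtain ⟨j, hj⟩ := T.exists_shift_eq K fun i => ⟨(ht i).1, (ht i).2.1⟩
  let b : Fin n → ℤ := fun i => (a i - 1 + 2 ^ k * t i) / 3
  have hb : ∀ i, 0 ≤ b i ∧ b i < 2 ^ k := by
    intro i
    have := ha i
    have := ht i
    have : 2 ^ k * t i ≤ 2 ^ k * 2 := mul_le_mul_of_nonneg_left (by omega) (by positivity)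
    have : 0 ≤ 2 ^ k * t i := mul_nonneg (by positivity) (ht i).1
    simp only [b]
    omega
  have ha_eq : a = fun i => 3 * b i + 1 - 2 ^ k * T.shift j K i := by
    rw [hj]
    funext i
    have := (ht i).2.2
    simp only [b]
    omega
  refine ⟨j, K, ?_⟩
  rw [ha_eq, ← Cube.gridCube_triple]
  exact descendant_gridCube _ hb

lemma exists_three_eq_of_mem_lattice (hD : IsDyadicLattice D) {j : Fin n → Fin 3} {R : Cube n}
    (hR : R ∈ T.lattice j) : ∃ Q ∈ D, Q.three = R := by
  obtain ⟨K, hK⟩ := hR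
  obtain ⟨k, b, -, rfl⟩ := hK.exists_eq_gridCube
  rw [bigCube, Cube.gridCube_triple]
  exact ⟨_, hD.gridCube_mem (T.mem K) k _, rfl⟩

lemma existsUnique_mem_lattice (hD : IsDyadicLattice D) {Q : Cube n} (hQ : Q ∈ D)
    (j : Fin n → Fin 3) : ∃! R : Cube n, R ∈ T.lattice j ∧ R.side = 3 * Q.side ∧ Q.set ⊆ R.set := by
  obtain ⟨K, hK⟩ := T.cofinal Q hQ
  obtain ⟨k, a, ha, rfl⟩ := hK.exists_eq_gridCube
  have hs := T.shift_mem j K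
  let b : Fin n → ℤ := fun i => (a i + 2 ^ k * T.shift j K i) / 3
  have hb : ∀ i, 0 ≤ b i ∧ b i < 2 ^ k ∧ |a i - (3 * b i + 1 - 2 ^ k * T.shift j K i)| ≤ 1 := by
    intro i
    have := ha i
    have := hs i
    have : 2 ^ k * T.shift j K i ≤ 2 ^ k * 2 :=
      mul_le_mul_of_nonneg_left (by omega) (by positivity)
    have : 0 ≤ 2 ^ k * T.shift j K i := mul_nonneg (by positivity) (hs i).1
    simp only [b, abs_le]
    omega
  set R := (T.bigCube j K).gridCube k b
  have hR : R ∈ T.lattice j := ⟨K, descendant_gridCube _ fun i => ⟨(hb i).1, (hb i).2.1⟩⟩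
  have hRh : R.h = 3 * ((T.P K).gridCube k a).h := by
    simp only [R, bigCube, Cube.gridCube_h, Cube.triple_h]
    ring
  have hQR : ((T.P K).gridCube k a).set ⊆ R.set := by
    simp only [R, bigCube, Cube.gridCube_triple]
    exact Cube.gridCube_set_subset_three fun i => (hb i).2.2
  refine ⟨R, ⟨hR, by simp only [Cube.side, hRh]; ring, hQR⟩, fun R' ⟨hR', hside, hsub⟩ => ?_⟩
  refine (T.isDyadicLattice_lattice hD j).eq_of_h_eq hR' hR ?_
    ⟨_, hsub (Cube.center_mem _), hQR (Cube.center_mem _)⟩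
  simp only [Cube.side] at hside
  linarith

end Tower

structure IsThreeLatticeFamily {ι : Type*} (D : Set (Cube n)) (Ds : ι → Set (Cube n)) : Prop where
  isDyadicLattice : ∀ j, IsDyadicLattice (Ds j)
  image_three : Cube.three '' D = ⋃ j, Ds j
  existsUnique : ∀ Q ∈ D, ∀ j, ∃! R : Cube n, R ∈ Ds j ∧ R.side = 3 * Q.side ∧ Q.set ⊆ R.set

lemma IsThreeLatticeFamily.comp_equiv {ι ι' : Type*} {Ds : ι → Set (Cube n)}
    (h : IsThreeLatticeFamily D Ds) (e : ι' ≃ ι) : IsThreeLatticeFamily D (Ds ∘ e) where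
  isDyadicLattice j := h.isDyadicLattice (e j)
  image_three := h.image_three.trans (e.surjective.iUnion_comp Ds).symm
  existsUnique Q hQ j := h.existsUnique Q hQ (e j)

lemma Tower.isThreeLatticeFamily (T : Tower D) (hD : IsDyadicLattice D) :
    IsThreeLatticeFamily D T.lattice where
  isDyadicLattice := T.isDyadicLattice_lattice hD
  image_three := by
    ext R
    simp only [mem_image, mem_iUnion]
    constructor
    · rintro ⟨Q, hQ, rfl⟩
      exact T.exists_three_mem_lattice hQ
    · rintro ⟨j, hR⟩
      exact T.exists_three_eq_of_mem_lattice hD hR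
  existsUnique _ hQ := T.existsUnique_mem_lattice hD hQ

lemma descendant_iff_of_dim_zero {P Q : Cube 0} : descendant P Q ↔ ∃ k : ℕ, Q.h = P.h / 2 ^ k := by
  constructor
  · intro h
    obtain ⟨k, z, -, rfl⟩ := h.exists_eq_gridCube
    exact ⟨k, rfl⟩
  · rintro ⟨k, hk⟩
    rw [Cube.eq_of_h_eq_of_dim_zero (R := P.gridCube k 0) hk]
    exact descendant_gridCube P finZeroElim

lemma IsDyadicLattice.isThreeLatticeFamily_of_dim_zero {D : Set (Cube 0)} (hD : IsDyadicLattice D) :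
    IsThreeLatticeFamily D fun _ : Fin 0 → Fin 3 => Cube.three '' D where
  isDyadicLattice _ := {
    mem_of_descendant := by
      rintro _ ⟨Q, hQ, rfl⟩ R hR
      obtain ⟨k, hk⟩ := descendant_iff_of_dim_zero.1 hR
      refine ⟨R.third, hD.mem_of_descendant Q hQ _ (descendant_iff_of_dim_zero.2 ⟨k, ?_⟩),
        R.three_third⟩
      simp only [Cube.third, hk, Cube.three_h]
      ring
    common_ancestor := by
      rintro _ ⟨Q, hQ, rfl⟩ _ ⟨Q', hQ', rfl⟩
      obtain ⟨S, hS, hSQ, hSQ'⟩ := hD.common_ancestor Q hQ Q' hQ'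
      obtain ⟨k, hk⟩ := descendant_iff_of_dim_zero.1 hSQ
      obtain ⟨k', hk'⟩ := descendant_iff_of_dim_zero.1 hSQ'
      refine ⟨S.three, ⟨S, hS, rfl⟩, descendant_iff_of_dim_zero.2 ⟨k, ?_⟩,
        descendant_iff_of_dim_zero.2 ⟨k', ?_⟩⟩ <;> simp [hk, hk'] <;> ring
    exists_contains := by
      obtain ⟨Q, hQ, -⟩ := hD.exists_contains ∅ isCompact_empty
      exact fun _ _ => ⟨Q.three, ⟨Q, hQ, rfl⟩, fun _ _ => finZeroElim⟩ }
  image_three := (iUnion_const _).symm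
  existsUnique Q hQ _ := by
    refine ⟨Q.three, ⟨⟨Q, hQ, rfl⟩, by simp [Cube.side]; ring, fun _ _ => finZeroElim⟩, ?_⟩
    rintro _ ⟨⟨Q', -, rfl⟩, hside, -⟩
    refine Cube.eq_of_h_eq_of_dim_zero ?_
    simp only [Cube.side, Cube.three_h] at hside ⊢
    linarith

lemma IsDyadicLattice.exists_isThreeLatticeFamily (hD : IsDyadicLattice D) :
    ∃ Ds : (Fin n → Fin 3) → Set (Cube n), IsThreeLatticeFamily D Ds := by
  rcases n.eq_zero_or_pos with rfl | hn
  · exact ⟨_, hD.isThreeLatticeFamily_of_dim_zero⟩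
  · obtain ⟨T⟩ := hD.nonempty_tower hn
    exact ⟨_, T.isThreeLatticeFamily hD⟩

/-- **Three lattice theorem.** For every dyadic lattice `𝒟` there are `3ⁿ` dyadic lattices
`𝒟¹, …, 𝒟^{3ⁿ}` with `{3Q : Q ∈ 𝒟} = ⋃ⱼ 𝒟ʲ`, and for every `Q ∈ 𝒟` and every `j` there is
a unique `R ∈ 𝒟ʲ` of sidelength `3ℓ(Q)` containing `Q`. -/
theorem three_lattice (n : ℕ) (D : Set (Cube n)) (hD : IsDyadicLattice D) :
    ∃ Ds : Fin (3 ^ n) → Set (Cube n),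
      (∀ j, IsDyadicLattice (Ds j)) ∧
      ((fun Q : Cube n => Q.three) '' D = ⋃ j, Ds j) ∧
      ∀ Q ∈ D, ∀ j, ∃! R : Cube n, R ∈ Ds j ∧ R.side = 3 * Q.side ∧ Q.set ⊆ R.set := by
  obtain ⟨Ds, hDs⟩ := hD.exists_isThreeLatticeFamily
  have h := hDs.comp_equiv finFunctionFinEquiv.symm
  exact ⟨_, h.isDyadicLattice, h.image_three, h.existsUnique⟩

end Frac
end
end

section
/- Let α, β, γ ≥ 0 with α + β + γ ≥ 1. Let ω, σ be weights on ℝⁿ, let 𝒮 ⊂ 𝒟 be a sparse family in a dyadic lattice 𝒟, and let R be a cube. (i) If α > 0, then Σ_{Q∈𝒮, Q⊂R} |Q|^α σ(Q)^β ω(Q)^γ ≤ C |R|^α σ(R)^β ω(R)^γ, where C depends only on n, α, β, γ and the sparseness constant of 𝒮. (ii) If α = 0, then Σ_{Q∈𝒮, Q⊂R} σ(Q)^β ω(Q)^γ ≤ C [σ]_{A_∞}^β [ω]_{A_∞}^γ σ(R)^β ω(R)^γ, with C depending only on n, β, γ and the sparseness constant of 𝒮. -/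
open MeasureTheory Set ENNReal

noncomputable section

/-!
Raising the terms to the power `s = a + β + γ ≥ 1` (with `∑ xᵢ ^ s ≤ (∑ xᵢ) ^ s`) reduces both
estimates to the case `a + β + γ = 1`. There `|Q|^a σ(Q)^β ω(Q)^γ = |Q| ⟨σ⟩_Q^β ⟨ω⟩_Q^γ`,
sparseness replaces `|Q|` by `η⁻¹ |E_Q|`, and Hölder's inequality splits the sum into the sums
`∑ |E_Q| ⟨w⟩_Q^p`, `p = β + γ`, for `w = σ, ω`.

If `a > 0`, then `p < 1`, and such a sum is at most `C_p |R| ⟨w⟩_R^p`: the maximal cubes among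
those with `⟨w⟩_Q ≥ 2^j ⟨w⟩_R` are disjoint, so the sets `E_Q` of all these cubes have total
measure at most `2^{-j} |R|`, and the dyadic layers sum geometrically.
If `a = 0`, then `p = 1`, and since `⟨w⟩_Q ≤ M(w 1_R)` on `E_Q`, the sum is at most
`∫_R M(w 1_R) ≤ [w]_{A∞} w(R)`.
-/

namespace Frac

section Sums

variable {ι : Type*}

theorem sum_rpow_le_rpow_sum (F : Finset ι) (f : ι → ℝ≥0∞) {q : ℝ} (hq : 1 ≤ q) :
    ∑ i ∈ F, f i ^ q ≤ (∑ i ∈ F, f i) ^ q := by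
  classical
  induction F using Finset.induction with
  | empty => simp
  | insert i F hi ih =>
    rw [Finset.sum_insert hi, Finset.sum_insert hi]
    exact (add_le_add le_rfl ih).trans (ENNReal.add_rpow_le_rpow_add _ _ hq)

theorem tsum_rpow_le_of_forall_sum_le {P : ι → Prop} {f : ι → ℝ≥0∞} {B : ℝ≥0∞} {q : ℝ}
    (hq : 1 ≤ q) (h : ∀ F : Finset ι, (∀ i ∈ F, P i) → ∑ i ∈ F, f i ≤ B) :
    ∑' i : {i // P i}, f i ^ q ≤ B ^ q := by
  rw [ENNReal.tsum_eq_iSup_sum]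
  refine iSup_le fun F => ?_
  calc ∑ i ∈ F, f i ^ q ≤ (∑ i ∈ F, f i) ^ q := sum_rpow_le_rpow_sum F (f ·) hq
    _ = (∑ i ∈ F.map (Function.Embedding.subtype P), f i) ^ q := by rw [Finset.sum_map]; rfl
    _ ≤ B ^ q := by
        gcongr
        exact h _ fun i hi => by obtain ⟨j, -, rfl⟩ := Finset.mem_map.1 hi; exact j.2

theorem sum_mul_le_inv_mul_sum_mul {F : Finset ι} {x y f : ι → ℝ≥0∞} {c : ℝ≥0∞} (hc0 : c ≠ 0)
    (hc : c ≠ ∞) (h : ∀ i ∈ F, c * x i ≤ y i) :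
    ∑ i ∈ F, x i * f i ≤ c⁻¹ * ∑ i ∈ F, y i * f i := by
  rw [Finset.mul_sum]
  refine Finset.sum_le_sum fun i hi => ?_
  rw [← mul_assoc]
  exact mul_le_mul_of_nonneg_right ((ENNReal.mul_le_iff_le_inv hc0 hc).1 (h i hi)) zero_le

theorem sum_rpow_mul_rpow_le (F : Finset ι) (f g : ι → ℝ≥0∞) {θ : ℝ} (hθ0 : 0 ≤ θ)
    (hθ1 : θ ≤ 1) :
    ∑ i ∈ F, f i ^ θ * g i ^ (1 - θ) ≤ (∑ i ∈ F, f i) ^ θ * (∑ i ∈ F, g i) ^ (1 - θ) := by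
  rcases hθ0.eq_or_lt with rfl | hθ0
  · simp
  rcases hθ1.eq_or_lt with rfl | hθ1
  · simp
  have := ENNReal.inner_le_Lp_mul_Lq F (f · ^ θ) (g · ^ (1 - θ))
    (Real.HolderConjugate.inv_one_sub_inv hθ0 hθ1)
  simpa [← ENNReal.rpow_mul, hθ0.ne', (sub_pos.2 hθ1).ne'] using this

theorem mul_rpow_mul_rpow_eq (e A B : ℝ≥0∞) (p : ℝ) {θ : ℝ} (hθ0 : 0 ≤ θ) (hθ1 : θ ≤ 1) :
    e * A ^ (p * θ) * B ^ (p * (1 - θ)) = (e * A ^ p) ^ θ * (e * B ^ p) ^ (1 - θ) := by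
  rw [ENNReal.mul_rpow_of_nonneg _ _ hθ0, ENNReal.mul_rpow_of_nonneg _ _ (sub_nonneg.2 hθ1),
    ← ENNReal.rpow_mul, ← ENNReal.rpow_mul]
  nth_rw 1 [← ENNReal.rpow_one e, ← add_sub_cancel θ 1,
    ENNReal.rpow_add_of_nonneg _ _ hθ0 (sub_nonneg.2 hθ1)]
  ring

theorem sum_mul_rpow_mul_rpow_le (F : Finset ι) (e A B : ι → ℝ≥0∞) (p : ℝ) {θ : ℝ}
    (hθ0 : 0 ≤ θ) (hθ1 : θ ≤ 1) :
    ∑ i ∈ F, e i * A i ^ (p * θ) * B i ^ (p * (1 - θ)) ≤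
      (∑ i ∈ F, e i * A i ^ p) ^ θ * (∑ i ∈ F, e i * B i ^ p) ^ (1 - θ) := by
  simpa only [mul_rpow_mul_rpow_eq _ _ _ p hθ0 hθ1] using
    sum_rpow_mul_rpow_le F (fun i => e i * A i ^ p) (fun i => e i * B i ^ p) hθ0 hθ1

theorem rpow_mul_rpow_mul_rpow_eq_mul_div {x : ℝ≥0∞} (y z : ℝ≥0∞) {a b c : ℝ} (hx0 : x ≠ 0)
    (hx : x ≠ ∞) (hb : 0 ≤ b) (hc : 0 ≤ c) (habc : a + b + c = 1) :
    x ^ a * y ^ b * z ^ c = x * (y / x) ^ b * (z / x) ^ c := by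
  have hcancel {e : ℝ} (he : 0 ≤ e) : x ^ e * x⁻¹ ^ e = 1 := by
    rw [← ENNReal.mul_rpow_of_nonneg _ _ he, ENNReal.mul_inv_cancel hx0 hx, ENNReal.one_rpow]
  simp only [div_eq_mul_inv, ENNReal.mul_rpow_of_nonneg _ _ hb, ENNReal.mul_rpow_of_nonneg _ _ hc]
  calc x ^ a * y ^ b * z ^ c = x ^ a * (x ^ b * x⁻¹ ^ b) * (x ^ c * x⁻¹ ^ c) * y ^ b * z ^ c := by
        rw [hcancel hb, hcancel hc, mul_one, mul_one]
    _ = x ^ (a + b + c) * (y ^ b * x⁻¹ ^ b) * (z ^ c * x⁻¹ ^ c) := by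
        rw [ENNReal.rpow_add _ _ hx0 hx, ENNReal.rpow_add _ _ hx0 hx]
        ring
    _ = x * (y ^ b * x⁻¹ ^ b) * (z ^ c * x⁻¹ ^ c) := by rw [habc, ENNReal.rpow_one]

theorem rpow_div_rpow_cancel (x : ℝ≥0∞) (a : ℝ) {q : ℝ} (hq : q ≠ 0) :
    (x ^ (a / q)) ^ q = x ^ a := by
  rw [← ENNReal.rpow_mul, div_mul_cancel₀ a hq]

theorem rpow_mul_two_pow_succ_mul_inv_two_pow (l : ℝ≥0∞) (j : ℕ) {p : ℝ} (hp : 0 ≤ p) :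
    (l * 2 ^ (j + 1)) ^ p * (2 ^ j)⁻¹ = l ^ p * (2 ^ p * (2 ^ (p - 1)) ^ j) := by
  have h2 : ((2 : ℝ≥0∞) ^ j) ^ p = (2 ^ p) ^ j := by
    rw [← ENNReal.rpow_natCast, ← ENNReal.rpow_mul, mul_comm, ENNReal.rpow_mul,
      ENNReal.rpow_natCast]
  rw [ENNReal.rpow_sub _ _ two_ne_zero ENNReal.ofNat_ne_top, ENNReal.rpow_one, div_eq_mul_inv,
    mul_pow, ENNReal.inv_pow, pow_succ, ENNReal.mul_rpow_of_nonneg _ _ hp,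
    ENNReal.mul_rpow_of_nonneg _ _ hp, h2]
  ring

end Sums

section Laminar

variable {ι X : Type*} [MeasurableSpace X] {μ ν : Measure X} {s E : ι → Set X} {F : Finset ι}

def IsLaminar (s : ι → Set X) (F : Set ι) : Prop :=
  F.Pairwise fun i j => s i ⊆ s j ∨ s j ⊆ s i ∨ Disjoint (s i) (s j)

theorem sum_measure_le_measure_of_subset {R : Set X} (hE : ∀ i ∈ F, MeasurableSet (E i))
    (hdisj : (F : Set ι).PairwiseDisjoint E) (hER : ∀ i ∈ F, E i ⊆ R) :
    ∑ i ∈ F, μ (E i) ≤ μ R := by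
  rw [← measure_biUnion_finset hdisj hE]
  exact measure_mono (iUnion₂_subset hER)

theorem mul_sum_measure_le_measure_biUnion {t : ℝ≥0∞} (hlam : IsLaminar s F)
    (hs : ∀ i ∈ F, MeasurableSet (s i)) (hE : ∀ i ∈ F, MeasurableSet (E i))
    (hEs : ∀ i ∈ F, E i ⊆ s i) (hdisj : (F : Set ι).PairwiseDisjoint E)
    (ht : ∀ i ∈ F, t * μ (s i) ≤ ν (s i)) :
    t * ∑ i ∈ F, μ (E i) ≤ ν (⋃ i ∈ F, s i) := by
  classical
  induction F using Finset.strongInduction with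
  | H F ih =>
  rcases F.eq_empty_or_nonempty with rfl | hne
  · simp
  -- a maximal member contains every member it meets, and the rest is handled by induction
  obtain ⟨i₀, hi₀, hmax⟩ := F.exists_maximalFor s hne
  set F' := F.filter fun i => ¬s i ⊆ s i₀
  have hF'F : F' ⊆ F := Finset.filter_subset _ _
  have hF' : F' ⊂ F := Finset.filter_ssubset.2 ⟨i₀, hi₀, not_not.2 subset_rfl⟩
  have hi₀F' : Disjoint (s i₀) (⋃ i ∈ F', s i) := by
    simp only [Set.disjoint_iUnion_right]
    intro i hi
    obtain ⟨hiF, hni⟩ := Finset.mem_filter.1 hi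
    have hne : i₀ ≠ i := by rintro rfl; exact hni subset_rfl
    rcases hlam hi₀ hiF hne with h | h | h
    · exact absurd (hmax hiF h) hni
    · exact absurd h hni
    · exact h
  have hinside : ∑ i ∈ F with s i ⊆ s i₀, μ (E i) ≤ μ (s i₀) :=
    sum_measure_le_measure_of_subset (fun i hi => hE i (Finset.mem_of_mem_filter i hi))
      (hdisj.subset (Finset.coe_subset.2 (Finset.filter_subset _ _)))
      (fun i hi => (hEs i (Finset.mem_of_mem_filter i hi)).trans (Finset.mem_filter.1 hi).2)
  have houtside : t * ∑ i ∈ F', μ (E i) ≤ ν (⋃ i ∈ F', s i) :=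
    ih F' hF' (hlam.mono (Finset.coe_subset.2 hF'F)) (fun i hi => hs i (hF'F hi))
      (fun i hi => hE i (hF'F hi)) (fun i hi => hEs i (hF'F hi))
      (hdisj.subset (Finset.coe_subset.2 hF'F)) (fun i hi => ht i (hF'F hi))
  calc t * ∑ i ∈ F, μ (E i)
      = t * ∑ i ∈ F with s i ⊆ s i₀, μ (E i) + t * ∑ i ∈ F', μ (E i) := by
        rw [← mul_add, Finset.sum_filter_add_sum_filter_not]
    _ ≤ ν (s i₀) + ν (⋃ i ∈ F', s i) :=
        add_le_add ((by gcongr : t * _ ≤ t * μ (s i₀)).trans (ht i₀ hi₀)) houtside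
    _ = ν (s i₀ ∪ ⋃ i ∈ F', s i) := (measure_union' hi₀F' (hs i₀ hi₀)).symm
    _ ≤ ν (⋃ i ∈ F, s i) :=
        measure_mono (union_subset (subset_biUnion_of_mem (u := s) hi₀)
          (biUnion_subset_biUnion_left (Finset.coe_subset.2 hF'F)))

theorem mul_sum_measure_filter_le_measure {R : Set X} (t : ℝ≥0∞) (hlam : IsLaminar s F)
    (hs : ∀ i ∈ F, MeasurableSet (s i)) (hE : ∀ i ∈ F, MeasurableSet (E i))
    (hEs : ∀ i ∈ F, E i ⊆ s i) (hdisj : (F : Set ι).PairwiseDisjoint E)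
    (hsR : ∀ i ∈ F, s i ⊆ R) :
    t * ∑ i ∈ F with t ≤ ν (s i) / μ (s i), μ (E i) ≤ ν R := by
  have hGF : F.filter (fun i => t ≤ ν (s i) / μ (s i)) ⊆ F := Finset.filter_subset _ _
  refine (mul_sum_measure_le_measure_biUnion (hlam.mono (Finset.coe_subset.2 hGF))
    (fun i hi => hs i (hGF hi)) (fun i hi => hE i (hGF hi)) (fun i hi => hEs i (hGF hi))
    (hdisj.subset (Finset.coe_subset.2 hGF)) (fun i hi => ?_)).trans
    (measure_mono (iUnion₂_subset fun i hi => hsR i (hGF hi)))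
  calc t * μ (s i) ≤ ν (s i) / μ (s i) * μ (s i) := by gcongr; exact (Finset.mem_filter.1 hi).2
    _ ≤ ν (s i) := by rw [mul_comm]; exact ENNReal.mul_div_le

theorem rpow_le_add_tsum_layers {a l : ℝ≥0∞} {p : ℝ} (hp : 0 ≤ p) (hl : l ≠ 0) (ha : a ≠ ∞) :
    a ^ p ≤ l ^ p + ∑' j : ℕ, if l * 2 ^ j ≤ a then (l * 2 ^ (j + 1)) ^ p else 0 := by
  rcases le_or_gt a l with hal | hla
  · exact le_add_right (ENNReal.rpow_le_rpow hal hp)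
  have hex : ∃ j : ℕ, a ≤ l * 2 ^ (j + 1) := by
    obtain ⟨j, hj⟩ := ENNReal.exists_nat_mul_gt hl ha
    refine ⟨j, hj.le.trans ?_⟩
    rw [mul_comm]
    gcongr
    exact_mod_cast (Nat.lt_two_pow_self.trans (Nat.pow_lt_pow_succ one_lt_two)).le
  have hlow : l * 2 ^ Nat.find hex ≤ a := by
    cases hj : Nat.find hex with
    | zero => simpa using hla.le
    | succ k => exact (not_le.1 (Nat.find_min hex (by omega : k < Nat.find hex))).le
  calc a ^ p ≤ (l * 2 ^ (Nat.find hex + 1)) ^ p := ENNReal.rpow_le_rpow (Nat.find_spec hex) hp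
    _ = if l * 2 ^ Nat.find hex ≤ a then (l * 2 ^ (Nat.find hex + 1)) ^ p else 0 := by
        rw [if_pos hlow]
    _ ≤ ∑' j : ℕ, if l * 2 ^ j ≤ a then (l * 2 ^ (j + 1)) ^ p else 0 := ENNReal.le_tsum _
    _ ≤ _ := le_add_self

/-- `1` accounts for the sets whose ratio `ν / μ` is below that of `R`, and
`2 ^ p * (1 - 2 ^ (p - 1))⁻¹` for the dyadic layers above it. For `p ≥ 1` the truncated
subtraction makes the constant `∞`. -/
def kolmogorovConst (p : ℝ) : ℝ≥0∞ := 1 + 2 ^ p * (1 - 2 ^ (p - 1))⁻¹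

theorem one_le_kolmogorovConst (p : ℝ) : 1 ≤ kolmogorovConst p := le_self_add

theorem kolmogorovConst_lt_top {p : ℝ} (hp0 : 0 ≤ p) (hp1 : p < 1) : kolmogorovConst p < ∞ := by
  have hr : (2 : ℝ≥0∞) ^ (p - 1) < 1 :=
    ENNReal.rpow_lt_one_of_one_lt_of_neg (by norm_num) (by linarith)
  refine ENNReal.add_lt_top.2 ⟨ENNReal.one_lt_top, ENNReal.mul_lt_top ?_ ?_⟩
  · exact ENNReal.rpow_lt_top_of_nonneg hp0 ENNReal.ofNat_ne_top
  · exact ENNReal.inv_lt_top.2 (tsub_pos_of_lt hr)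

theorem sum_measure_mul_layer_le {R : Set X} {l m : ℝ≥0∞} {p : ℝ} (j : ℕ)
    (hlam : IsLaminar s F) (hs : ∀ i ∈ F, MeasurableSet (s i))
    (hE : ∀ i ∈ F, MeasurableSet (E i)) (hEs : ∀ i ∈ F, E i ⊆ s i)
    (hdisj : (F : Set ι).PairwiseDisjoint E) (hsR : ∀ i ∈ F, s i ⊆ R) (hl0 : l ≠ 0)
    (hl : l ≠ ∞) (hνR : ν R ≤ l * m) (hp : 0 ≤ p) :
    ∑ i ∈ F, μ (E i) * (if l * 2 ^ j ≤ ν (s i) / μ (s i) then (l * 2 ^ (j + 1)) ^ p else 0) ≤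
      m * l ^ p * (2 ^ p * (2 ^ (p - 1)) ^ j) := by
  have hG : ∑ i ∈ F with l * 2 ^ j ≤ ν (s i) / μ (s i), μ (E i) ≤ (2 ^ j)⁻¹ * m := by
    refine (ENNReal.mul_le_iff_le_inv (by positivity) (ENNReal.pow_ne_top ENNReal.ofNat_ne_top)).1
      ((ENNReal.mul_le_mul_iff_right hl0 hl).1 ?_)
    rw [← mul_assoc]
    exact (mul_sum_measure_filter_le_measure _ hlam hs hE hEs hdisj hsR).trans hνR
  calc ∑ i ∈ F, μ (E i) * (if l * 2 ^ j ≤ ν (s i) / μ (s i) then (l * 2 ^ (j + 1)) ^ p else 0)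
      = (l * 2 ^ (j + 1)) ^ p * ∑ i ∈ F with l * 2 ^ j ≤ ν (s i) / μ (s i), μ (E i) := by
        rw [Finset.sum_filter, Finset.mul_sum]
        exact Finset.sum_congr rfl fun i _ => by split_ifs <;> simp [mul_comm]
    _ ≤ (l * 2 ^ (j + 1)) ^ p * ((2 ^ j)⁻¹ * m) := by gcongr
    _ = m * l ^ p * (2 ^ p * (2 ^ (p - 1)) ^ j) := by
        rw [← mul_assoc, rpow_mul_two_pow_succ_mul_inv_two_pow _ _ hp]
        ring

theorem sum_measure_mul_div_rpow_le {R : Set X} {p : ℝ} (hlam : IsLaminar s F)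
    (hs : ∀ i ∈ F, MeasurableSet (s i)) (hE : ∀ i ∈ F, MeasurableSet (E i))
    (hEs : ∀ i ∈ F, E i ⊆ s i) (hdisj : (F : Set ι).PairwiseDisjoint E)
    (hsR : ∀ i ∈ F, s i ⊆ R) (hμs : ∀ i ∈ F, μ (s i) ≠ 0) (hμR0 : μ R ≠ 0) (hμR : μ R ≠ ∞)
    (hνR : ν R ≠ ∞) (hp0 : 0 ≤ p) :
    ∑ i ∈ F, μ (E i) * (ν (s i) / μ (s i)) ^ p ≤ kolmogorovConst p * μ R * (ν R / μ R) ^ p := by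
  set l := ν R / μ R
  have hbase : ∑ i ∈ F, μ (E i) * l ^ p ≤ μ R * l ^ p := by
    rw [← Finset.sum_mul]
    gcongr
    exact sum_measure_le_measure_of_subset hE hdisj fun i hi => (hEs i hi).trans (hsR i hi)
  rcases eq_or_ne (ν R) 0 with hν0 | hν0
  · have hl : ∀ i ∈ F, ν (s i) / μ (s i) = l := fun i hi => by
      simp [l, hν0, measure_mono_null (hsR i hi) hν0]
    rw [Finset.sum_congr rfl fun i hi => by rw [hl i hi], mul_assoc]
    exact hbase.trans (le_mul_of_one_le_left' (one_le_kolmogorovConst p))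
  have hl0 : l ≠ 0 := ENNReal.div_ne_zero.2 ⟨hν0, hμR⟩
  have hltop : l ≠ ∞ := ENNReal.div_ne_top hνR hμR0
  have hlayer (j : ℕ) := sum_measure_mul_layer_le (μ := μ) j hlam hs hE hEs hdisj hsR hl0 hltop
    (ENNReal.div_mul_cancel hμR0 hμR).ge hp0
  calc ∑ i ∈ F, μ (E i) * (ν (s i) / μ (s i)) ^ p
      ≤ ∑ i ∈ F, μ (E i) * (l ^ p + ∑' j : ℕ,
          if l * 2 ^ j ≤ ν (s i) / μ (s i) then (l * 2 ^ (j + 1)) ^ p else 0) := by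
        gcongr with i hi
        exact rpow_le_add_tsum_layers hp0 hl0 (ENNReal.div_ne_top
          (ne_top_of_le_ne_top hνR (measure_mono (hsR i hi))) (hμs i hi))
    _ = ∑ i ∈ F, μ (E i) * l ^ p + ∑' j : ℕ, ∑ i ∈ F, μ (E i) *
          (if l * 2 ^ j ≤ ν (s i) / μ (s i) then (l * 2 ^ (j + 1)) ^ p else 0) := by
        simp_rw [mul_add, Finset.sum_add_distrib, ← ENNReal.tsum_mul_left]
        rw [Summable.tsum_finsetSum fun _ _ => ENNReal.summable]
    _ ≤ μ R * l ^ p + ∑' j : ℕ, μ R * l ^ p * (2 ^ p * (2 ^ (p - 1)) ^ j) :=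
        add_le_add hbase (ENNReal.tsum_le_tsum hlayer)
    _ = kolmogorovConst p * μ R * l ^ p := by
        rw [ENNReal.tsum_mul_left, ENNReal.tsum_mul_left, ENNReal.tsum_geometric, kolmogorovConst]
        ring

end Laminar

section Cubes

variable {n : ℕ}

theorem Cube.set_eq (Q : Cube n) :
    Q.set = univ.pi fun i => Ico (Q.c i - Q.h) (Q.c i + Q.h) := by
  ext y; simp [Cube.set, Set.mem_pi]

theorem Cube.measurableSet_set (Q : Cube n) : MeasurableSet Q.set := by
  rw [Cube.set_eq]; exact MeasurableSet.univ_pi fun i => measurableSet_Ico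

theorem Cube.set_subset_Icc_s9 (Q : Cube n) :
    Q.set ⊆ Icc (fun i => Q.c i - Q.h) (fun i => Q.c i + Q.h) :=
  fun _ hy => ⟨fun i => (hy i).1, fun i => (hy i).2.le⟩

theorem Cube.vol_ne_zero (Q : Cube n) : Q.vol ≠ 0 := by
  rw [Cube.vol, Cube.set_eq, volume_pi_pi, Finset.prod_ne_zero_iff]
  intro i _
  simp [Real.volume_Ico, Q.h_pos]

theorem Cube.vol_ne_top (Q : Cube n) : Q.vol ≠ ∞ :=
  ne_top_of_le_ne_top isCompact_Icc.measure_lt_top.ne (measure_mono Q.set_subset_Icc_s9)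

theorem Cube.child_subset (Q : Cube n) (ε : Fin n → Bool) : (Q.child ε).set ⊆ Q.set := by
  intro y hy i
  have hyi := hy i
  have := Q.h_pos
  simp only [Cube.child] at hyi
  split_ifs at hyi <;> constructor <;> linarith [hyi.1, hyi.2]

theorem Cube.child_disjoint (Q : Cube n) {ε ε' : Fin n → Bool} (h : ε ≠ ε') :
    Disjoint (Q.child ε).set (Q.child ε').set := by
  obtain ⟨i, hi⟩ := Function.ne_iff.1 h
  refine Set.disjoint_left.2 fun y hy hy' => ?_
  have h1 := hy i
  have h2 := hy' i
  simp only [Cube.child] at h1 h2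
  cases hε : ε i <;> cases hε' : ε' i <;>
    simp only [hε, hε', Bool.false_eq_true, if_false, if_true, ne_eq, not_true_eq_false]
      at h1 h2 hi <;>
    linarith [h1.1, h1.2, h2.1, h2.2]

theorem set_subset_of_descendant {Q R : Cube n} (h : descendant Q R) : R.set ⊆ Q.set := by
  induction h with
  | refl => exact subset_rfl
  | tail _ hchild ih =>
    obtain ⟨ε, rfl⟩ := hchild
    exact (Cube.child_subset _ ε).trans ih

theorem subset_or_subset_or_disjoint_of_descendant {A Q Q' : Cube n} (h : descendant A Q)
    (h' : descendant A Q') : Q.set ⊆ Q'.set ∨ Q'.set ⊆ Q.set ∨ Disjoint Q.set Q'.set := by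
  induction h using Relation.ReflTransGen.head_induction_on generalizing Q' with
  | refl => exact Or.inr (Or.inl (set_subset_of_descendant h'))
  | head hchild hdesc ih =>
    rcases Relation.ReflTransGen.cases_head h' with rfl | ⟨C', hchild', hdesc'⟩
    · exact Or.inl (set_subset_of_descendant (.head hchild hdesc))
    obtain ⟨ε, rfl⟩ := hchild
    obtain ⟨ε', rfl⟩ := hchild'
    by_cases hεε' : ε = ε'
    · subst hεε'
      exact ih hdesc'
    · exact Or.inr (Or.inr ((Cube.child_disjoint _ hεε').mono
        (set_subset_of_descendant hdesc) (set_subset_of_descendant hdesc')))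

theorem IsDyadicLattice.isLaminar {D : Set (Cube n)} (hD : IsDyadicLattice D) :
    IsLaminar Cube.set D := fun Q hQ Q' hQ' _ => by
  obtain ⟨A, -, hAQ, hAQ'⟩ := hD.common_ancestor Q hQ Q' hQ'
  exact subset_or_subset_or_disjoint_of_descendant hAQ hAQ'

theorem wInt_eq_withDensity (w : (Fin n → ℝ) → ℝ) (Q : Cube n) :
    wInt w Q = volume.withDensity (fun x => ENNReal.ofReal (w x)) Q.set :=
  (withDensity_apply _ Q.measurableSet_set).symm

theorem wInt_ne_top {w : (Fin n → ℝ) → ℝ} (hw : LocallyIntegrable w volume) (Q : Cube n) :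
    wInt w Q ≠ ∞ :=
  ((hw.integrableOn_isCompact isCompact_Icc).mono_set Q.set_subset_Icc_s9).lintegral_lt_top.ne

theorem sum_volume_mul_wInt_div_vol_rpow_le {D : Set (Cube n)} (hD : IsDyadicLattice D)
    {F : Finset (Cube n)} {R : Cube n} {E : Cube n → Set (Fin n → ℝ)}
    (hF : ∀ Q ∈ F, Q ∈ D ∧ Q.set ⊆ R.set) (hE : ∀ Q ∈ F, MeasurableSet (E Q) ∧ E Q ⊆ Q.set)
    (hdisj : (F : Set (Cube n)).PairwiseDisjoint E) {w : (Fin n → ℝ) → ℝ} (hw : wInt w R ≠ ∞)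
    {p : ℝ} (hp : 0 ≤ p) :
    ∑ Q ∈ F, volume (E Q) * (wInt w Q / Q.vol) ^ p ≤
      kolmogorovConst p * R.vol * (wInt w R / R.vol) ^ p := by
  simp only [wInt_eq_withDensity] at hw ⊢
  exact sum_measure_mul_div_rpow_le (hD.isLaminar.mono fun Q hQ => (hF Q hQ).1)
    (fun Q _ => Q.measurableSet_set) (fun Q hQ => (hE Q hQ).1) (fun Q hQ => (hE Q hQ).2) hdisj
    (fun Q hQ => (hF Q hQ).2) (fun Q _ => Q.vol_ne_zero) R.vol_ne_zero R.vol_ne_top hw hp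

theorem wInt_div_vol_le_emax_indicator {w : (Fin n → ℝ) → ℝ} {Q R : Cube n} (hQR : Q.set ⊆ R.set)
    {x : Fin n → ℝ} (hx : x ∈ Q.set) :
    wInt w Q / Q.vol ≤ emax (R.set.indicator fun y => ENNReal.ofReal (w y)) x := by
  have hQ : ∫⁻ y in Q.set, R.set.indicator (fun y => ENNReal.ofReal (w y)) y = wInt w Q := by
    rw [setLIntegral_indicator R.measurableSet_set, inter_eq_right.2 hQR]
    rfl
  rw [ENNReal.div_eq_inv_mul, ← hQ, emax]
  exact le_iSup₂_of_le Q hx le_rfl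

theorem lintegral_emax_indicator_le {w : (Fin n → ℝ) → ℝ} {R : Cube n} (hw : wInt w R ≠ ∞) :
    ∫⁻ x in R.set, emax (R.set.indicator fun y => ENNReal.ofReal (w y)) x ≤
      Ainf w * wInt w R := by
  rcases eq_or_ne (wInt w R) 0 with h0 | h0
  · have hmax (x : Fin n → ℝ) : emax (R.set.indicator fun y => ENNReal.ofReal (w y)) x = 0 := by
      refine le_antisymm (iSup₂_le fun Q _ => ?_) zero_le
      have : ∫⁻ y in Q.set, R.set.indicator (fun y => ENNReal.ofReal (w y)) y = 0 := by
        refine le_antisymm ((setLIntegral_le_lintegral _ _).trans ?_) zero_le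
        rw [lintegral_indicator R.measurableSet_set]
        exact h0.le
      simp [this]
    simp [hmax]
  calc ∫⁻ x in R.set, emax (R.set.indicator fun y => ENNReal.ofReal (w y)) x
      = wInt w R * ((wInt w R)⁻¹ *
          ∫⁻ x in R.set, emax (R.set.indicator fun y => ENNReal.ofReal (w y)) x) := by
        rw [← mul_assoc, ENNReal.mul_inv_cancel h0 hw, one_mul]
    _ ≤ wInt w R * Ainf w := by
        gcongr
        rw [Ainf]
        exact le_iSup_of_le R le_rfl
    _ = Ainf w * wInt w R := mul_comm _ _

theorem sum_volume_mul_wInt_div_vol_le {F : Finset (Cube n)} {R : Cube n}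
    {E : Cube n → Set (Fin n → ℝ)}
    (hF : ∀ Q ∈ F, Q.set ⊆ R.set) (hE : ∀ Q ∈ F, MeasurableSet (E Q) ∧ E Q ⊆ Q.set)
    (hdisj : (F : Set (Cube n)).PairwiseDisjoint E) {w : (Fin n → ℝ) → ℝ} (hw : wInt w R ≠ ∞) :
    ∑ Q ∈ F, volume (E Q) * (wInt w Q / Q.vol) ≤ Ainf w * wInt w R := by
  set M := emax (R.set.indicator fun y => ENNReal.ofReal (w y))
  calc ∑ Q ∈ F, volume (E Q) * (wInt w Q / Q.vol)
      ≤ ∑ Q ∈ F, ∫⁻ x in E Q, M x := Finset.sum_le_sum fun Q hQ => by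
        rw [mul_comm, ← setLIntegral_const]
        exact setLIntegral_mono' (hE Q hQ).1 fun x hx =>
          wInt_div_vol_le_emax_indicator (hF Q hQ) ((hE Q hQ).2 hx)
    _ = ∫⁻ x in ⋃ Q ∈ F, E Q, M x :=
        (lintegral_biUnion_finset hdisj (fun Q hQ => (hE Q hQ).1) _).symm
    _ ≤ ∫⁻ x in R.set, M x :=
        lintegral_mono_set (iUnion₂_subset fun Q hQ => (hE Q hQ).2.trans (hF Q hQ))
    _ ≤ Ainf w * wInt w R := lintegral_emax_indicator_le hw

theorem IsSparse.exists_sets {η : ℝ} {S : Set (Cube n)} (hS : IsSparse η S) {F : Finset (Cube n)}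
    (hF : ∀ Q ∈ F, Q ∈ S) :
    ∃ E : Cube n → Set (Fin n → ℝ), (∀ Q ∈ F, MeasurableSet (E Q) ∧ E Q ⊆ Q.set) ∧
      (F : Set (Cube n)).PairwiseDisjoint E ∧ ∀ Q ∈ F, ENNReal.ofReal η * Q.vol ≤ volume (E Q) := by
  obtain ⟨E, hE, hdisj⟩ := hS
  refine ⟨E, fun Q hQ => ⟨(hE Q (hF Q hQ)).1, (hE Q (hF Q hQ)).2.1⟩, fun Q hQ Q' hQ' hne => ?_,
    fun Q hQ => (hE Q (hF Q hQ)).2.2⟩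
  exact hdisj Q (hF Q hQ) Q' (hF Q' hQ') hne

theorem sum_vol_rpow_mul_wInt_rpow_le {D S : Set (Cube n)} {η : ℝ} (hD : IsDyadicLattice D)
    (hSD : S ⊆ D) (hS : IsSparse η S) (hη : 0 < η) {σ ω : (Fin n → ℝ) → ℝ} {R : Cube n}
    (hσ : wInt σ R ≠ ∞) (hω : wInt ω R ≠ ∞) {a β γ : ℝ} (hβ : 0 ≤ β) (hγ : 0 ≤ γ)
    (habc : a + β + γ = 1) (F : Finset (Cube n)) (hF : ∀ Q ∈ F, Q ∈ S ∧ Q.set ⊆ R.set) :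
    ∑ Q ∈ F, Q.vol ^ a * wInt σ Q ^ β * wInt ω Q ^ γ ≤
      (ENNReal.ofReal η)⁻¹ * kolmogorovConst (1 - a) *
        (R.vol ^ a * wInt σ R ^ β * wInt ω R ^ γ) := by
  obtain ⟨E, hE, hdisj, hηE⟩ := hS.exists_sets fun Q hQ => (hF Q hQ).1
  set p := 1 - a
  have hp : p = β + γ := by linarith
  set θ := β / p
  have hθ0 : 0 ≤ θ := div_nonneg hβ (by linarith)
  have hθ1 : θ ≤ 1 := div_le_one_of_le₀ (by linarith) (by linarith)
  have hpθ : p * θ = β := by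
    rcases eq_or_ne p 0 with h | h
    · rw [h, zero_mul]; linarith
    · exact mul_div_cancel₀ β h
  have hpθ' : p * (1 - θ) = γ := by rw [mul_one_sub, hpθ]; linarith
  have hkol {w : (Fin n → ℝ) → ℝ} (hw : wInt w R ≠ ∞) :=
    sum_volume_mul_wInt_div_vol_rpow_le hD (fun Q hQ => ⟨hSD (hF Q hQ).1, (hF Q hQ).2⟩) hE hdisj hw
      (hp ▸ add_nonneg hβ hγ)
  have havg (Q : Cube n) := rpow_mul_rpow_mul_rpow_eq_mul_div (wInt σ Q) (wInt ω Q)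
    Q.vol_ne_zero Q.vol_ne_top hβ hγ habc
  calc ∑ Q ∈ F, Q.vol ^ a * wInt σ Q ^ β * wInt ω Q ^ γ
      = ∑ Q ∈ F, Q.vol * ((wInt σ Q / Q.vol) ^ β * (wInt ω Q / Q.vol) ^ γ) := by
        simp only [havg, mul_assoc]
    _ ≤ (ENNReal.ofReal η)⁻¹ *
          ∑ Q ∈ F, volume (E Q) * ((wInt σ Q / Q.vol) ^ β * (wInt ω Q / Q.vol) ^ γ) :=
        sum_mul_le_inv_mul_sum_mul (ENNReal.ofReal_pos.2 hη).ne' ENNReal.ofReal_ne_top hηE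
    _ ≤ (ENNReal.ofReal η)⁻¹ * ((∑ Q ∈ F, volume (E Q) * (wInt σ Q / Q.vol) ^ p) ^ θ *
          (∑ Q ∈ F, volume (E Q) * (wInt ω Q / Q.vol) ^ p) ^ (1 - θ)) := by
        gcongr
        simpa only [hpθ, hpθ', mul_assoc] using sum_mul_rpow_mul_rpow_le F (fun Q => volume (E Q))
          (fun Q => wInt σ Q / Q.vol) (fun Q => wInt ω Q / Q.vol) p hθ0 hθ1
    _ ≤ (ENNReal.ofReal η)⁻¹ * ((kolmogorovConst p * R.vol * (wInt σ R / R.vol) ^ p) ^ θ *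
          (kolmogorovConst p * R.vol * (wInt ω R / R.vol) ^ p) ^ (1 - θ)) := by
        gcongr
        exacts [hkol hσ, hkol hω]
    _ = (ENNReal.ofReal η)⁻¹ * kolmogorovConst p * (R.vol ^ a * wInt σ R ^ β * wInt ω R ^ γ) := by
        rw [← mul_rpow_mul_rpow_eq _ _ _ p hθ0 hθ1, hpθ, hpθ', havg R]
        ring

theorem sum_wInt_rpow_mul_wInt_rpow_le {S : Set (Cube n)} {η : ℝ} (hS : IsSparse η S)
    (hη : 0 < η) {σ ω : (Fin n → ℝ) → ℝ} {R : Cube n} (hσ : wInt σ R ≠ ∞) (hω : wInt ω R ≠ ∞)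
    {β γ : ℝ} (hβ : 0 ≤ β) (hγ : 0 ≤ γ) (hβγ : β + γ = 1) (F : Finset (Cube n))
    (hF : ∀ Q ∈ F, Q ∈ S ∧ Q.set ⊆ R.set) :
    ∑ Q ∈ F, wInt σ Q ^ β * wInt ω Q ^ γ ≤
      (ENNReal.ofReal η)⁻¹ * Ainf σ ^ β * Ainf ω ^ γ * (wInt σ R ^ β * wInt ω R ^ γ) := by
  obtain ⟨E, hE, hdisj, hηE⟩ := hS.exists_sets fun Q hQ => (hF Q hQ).1
  have hFR : ∀ Q ∈ F, Q.set ⊆ R.set := fun Q hQ => (hF Q hQ).2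
  have havg (Q : Cube n) : wInt σ Q ^ β * wInt ω Q ^ γ =
      Q.vol * ((wInt σ Q / Q.vol) ^ β * (wInt ω Q / Q.vol) ^ γ) := by
    simpa [mul_assoc] using rpow_mul_rpow_mul_rpow_eq_mul_div (a := 0) (wInt σ Q) (wInt ω Q)
      Q.vol_ne_zero Q.vol_ne_top hβ hγ (by linarith)
  calc ∑ Q ∈ F, wInt σ Q ^ β * wInt ω Q ^ γ
      = ∑ Q ∈ F, Q.vol * ((wInt σ Q / Q.vol) ^ β * (wInt ω Q / Q.vol) ^ γ) := by
        simp only [havg]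
    _ ≤ (ENNReal.ofReal η)⁻¹ *
          ∑ Q ∈ F, volume (E Q) * ((wInt σ Q / Q.vol) ^ β * (wInt ω Q / Q.vol) ^ γ) :=
        sum_mul_le_inv_mul_sum_mul (ENNReal.ofReal_pos.2 hη).ne' ENNReal.ofReal_ne_top hηE
    _ ≤ (ENNReal.ofReal η)⁻¹ * ((∑ Q ∈ F, volume (E Q) * (wInt σ Q / Q.vol)) ^ β *
          (∑ Q ∈ F, volume (E Q) * (wInt ω Q / Q.vol)) ^ γ) := by
        gcongr
        have hγβ : γ = 1 - β := by linarith
        simpa only [one_mul, ENNReal.rpow_one, ← hγβ, mul_assoc] using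
          sum_mul_rpow_mul_rpow_le F (fun Q => volume (E Q)) (fun Q => wInt σ Q / Q.vol)
            (fun Q => wInt ω Q / Q.vol) 1 hβ (by linarith)
    _ ≤ (ENNReal.ofReal η)⁻¹ * ((Ainf σ * wInt σ R) ^ β * (Ainf ω * wInt ω R) ^ γ) := by
        gcongr
        exacts [sum_volume_mul_wInt_div_vol_le hFR hE hdisj hσ,
          sum_volume_mul_wInt_div_vol_le hFR hE hdisj hω]
    _ = (ENNReal.ofReal η)⁻¹ * Ainf σ ^ β * Ainf ω ^ γ * (wInt σ R ^ β * wInt ω R ^ γ) := by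
        rw [ENNReal.mul_rpow_of_nonneg _ _ hβ, ENNReal.mul_rpow_of_nonneg _ _ hγ]
        ring

theorem tsum_vol_rpow_mul_wInt_rpow_le {D S : Set (Cube n)} {η : ℝ} (hD : IsDyadicLattice D)
    (hSD : S ⊆ D) (hS : IsSparse η S) (hη : 0 < η) {σ ω : (Fin n → ℝ) → ℝ} {R : Cube n}
    (hσ : wInt σ R ≠ ∞) (hω : wInt ω R ≠ ∞) {a β γ : ℝ} (hβ : 0 ≤ β) (hγ : 0 ≤ γ)
    (hsum : 1 ≤ a + β + γ) :
    ∑' Q : {Q : Cube n // Q ∈ S ∧ Q.set ⊆ R.set}, Q.1.vol ^ a * wInt σ Q.1 ^ β * wInt ω Q.1 ^ γ ≤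
      ((ENNReal.ofReal η)⁻¹ * kolmogorovConst (1 - a / (a + β + γ))) ^ (a + β + γ) *
        (R.vol ^ a * wInt σ R ^ β * wInt ω R ^ γ) := by
  have hs : 0 < a + β + γ := by linarith
  have key := tsum_rpow_le_of_forall_sum_le hsum fun F hF =>
    sum_vol_rpow_mul_wInt_rpow_le (a := a / (a + β + γ)) hD hSD hS hη hσ hω (div_nonneg hβ hs.le)
      (div_nonneg hγ hs.le) (by field_simp) F hF
  simpa only [ENNReal.mul_rpow_of_nonneg _ _ hs.le, rpow_div_rpow_cancel _ _ hs.ne'] using key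

theorem tsum_wInt_rpow_mul_wInt_rpow_le {S : Set (Cube n)} {η : ℝ} (hS : IsSparse η S)
    (hη : 0 < η) {σ ω : (Fin n → ℝ) → ℝ} {R : Cube n} (hσ : wInt σ R ≠ ∞) (hω : wInt ω R ≠ ∞)
    {β γ : ℝ} (hβ : 0 ≤ β) (hγ : 0 ≤ γ) (hsum : 1 ≤ β + γ) :
    ∑' Q : {Q : Cube n // Q ∈ S ∧ Q.set ⊆ R.set}, wInt σ Q.1 ^ β * wInt ω Q.1 ^ γ ≤
      (ENNReal.ofReal η)⁻¹ ^ (β + γ) * Ainf σ ^ β * Ainf ω ^ γ * (wInt σ R ^ β * wInt ω R ^ γ) := by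
  have hs : 0 < β + γ := by linarith
  have key := tsum_rpow_le_of_forall_sum_le hsum fun F hF =>
    sum_wInt_rpow_mul_wInt_rpow_le hS hη hσ hω (div_nonneg hβ hs.le) (div_nonneg hγ hs.le)
      (by field_simp) F hF
  simpa only [ENNReal.mul_rpow_of_nonneg _ _ hs.le, rpow_div_rpow_cancel _ _ hs.ne'] using key

end Cubes

theorem sparse_carleson_sum_general (n : ℕ) (a β γ η : ℝ)
    (ha : 0 ≤ a) (hβ : 0 ≤ β) (hγ : 0 ≤ γ) (hsum : 1 ≤ a + β + γ)
    (hη : 0 < η) :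
    ∃ C : ℝ≥0∞, 0 < C ∧ C < ∞ ∧
      ∀ (D S : Set (Cube n)), IsDyadicLattice D → S ⊆ D → IsSparse η S →
      ∀ ω σ : (Fin n → ℝ) → ℝ,
        (∀ x, 0 ≤ ω x) → LocallyIntegrable ω volume →
        (∀ x, 0 ≤ σ x) → LocallyIntegrable σ volume →
      ∀ R : Cube n,
        (0 < a →
          (∑' Q : {Q : Cube n // Q ∈ S ∧ Q.set ⊆ R.set},
              Q.1.vol ^ a * wInt σ Q.1 ^ β * wInt ω Q.1 ^ γ) ≤
            C * (R.vol ^ a * wInt σ R ^ β * wInt ω R ^ γ)) ∧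
        (a = 0 →
          (∑' Q : {Q : Cube n // Q ∈ S ∧ Q.set ⊆ R.set},
              wInt σ Q.1 ^ β * wInt ω Q.1 ^ γ) ≤
            C * Ainf σ ^ β * Ainf ω ^ γ * (wInt σ R ^ β * wInt ω R ^ γ)) := by
  have hs : 0 < a + β + γ := by linarith
  have hη0 : (ENNReal.ofReal η)⁻¹ ≠ 0 := ENNReal.inv_ne_zero.2 ENNReal.ofReal_ne_top
  have hηtop : (ENNReal.ofReal η)⁻¹ ≠ ∞ := ENNReal.inv_ne_top.2 (ENNReal.ofReal_pos.2 hη).ne'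
  rcases ha.eq_or_lt with rfl | hapos
  · refine ⟨(ENNReal.ofReal η)⁻¹ ^ (β + γ), ENNReal.rpow_pos (pos_iff_ne_zero.2 hη0) hηtop,
      ENNReal.rpow_lt_top_of_nonneg (by linarith) hηtop,
      fun D S _ _ hS ω σ _ hω _ hσ R => ⟨fun h => (lt_irrefl 0 h).elim, fun _ => ?_⟩⟩
    exact tsum_wInt_rpow_mul_wInt_rpow_le hS hη (wInt_ne_top hσ R) (wInt_ne_top hω R) hβ hγ
      (by linarith)
  · set K := kolmogorovConst (1 - a / (a + β + γ))
    have hK0 : K ≠ 0 := (zero_lt_one.trans_le (one_le_kolmogorovConst _)).ne'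
    have hK : K ≠ ∞ := (kolmogorovConst_lt_top (sub_nonneg.2 (div_le_one_of_le₀ (by linarith)
      hs.le)) (sub_lt_self _ (div_pos hapos hs))).ne
    refine ⟨((ENNReal.ofReal η)⁻¹ * K) ^ (a + β + γ),
      ENNReal.rpow_pos (pos_iff_ne_zero.2 (mul_ne_zero hη0 hK0)) (ENNReal.mul_ne_top hηtop hK),
      ENNReal.rpow_lt_top_of_nonneg hs.le (ENNReal.mul_ne_top hηtop hK),
      fun D S hD hSD hS ω σ _ hω _ hσ R => ⟨fun _ => ?_, fun h => (hapos.ne' h).elim⟩⟩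
    exact tsum_vol_rpow_mul_wInt_rpow_le hD hSD hS hη (wInt_ne_top hσ R) (wInt_ne_top hω R) hβ hγ
      hsum

/-- **Carleson-type sums over sparse families** (Fackler–Hytönen, Lemma 4.2). -/
theorem sparse_carleson_sum (n : ℕ) (a β γ η : ℝ)
    (ha : 0 ≤ a) (hβ : 0 ≤ β) (hγ : 0 ≤ γ) (hsum : 1 ≤ a + β + γ)
    (hη : 0 < η) (hη1 : η < 1) :
    ∃ C : ℝ≥0∞, 0 < C ∧ C < ∞ ∧
      ∀ (D S : Set (Cube n)), IsDyadicLattice D → S ⊆ D → IsSparse η S →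
      ∀ ω σ : (Fin n → ℝ) → ℝ,
        (∀ x, 0 ≤ ω x) → LocallyIntegrable ω volume →
        (∀ x, 0 ≤ σ x) → LocallyIntegrable σ volume →
      ∀ R : Cube n,
        (0 < a →
          (∑' Q : {Q : Cube n // Q ∈ S ∧ Q.set ⊆ R.set},
              Q.1.vol ^ a * wInt σ Q.1 ^ β * wInt ω Q.1 ^ γ) ≤
            C * (R.vol ^ a * wInt σ R ^ β * wInt ω R ^ γ)) ∧
        (a = 0 →
          (∑' Q : {Q : Cube n // Q ∈ S ∧ Q.set ⊆ R.set},
              wInt σ Q.1 ^ β * wInt ω Q.1 ^ γ) ≤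
            C * Ainf σ ^ β * Ainf ω ^ γ * (wInt σ R ^ β * wInt ω R ^ γ)) :=
  sparse_carleson_sum_general n a β γ η ha hβ hγ hsum hη

end Frac
end
end
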